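/- arXiv:2103.04577 — 8 statements merged into one kernel-verified Lean document; each statement's English description precedes it below -/
import Mathlib

section
/- Let A be an n×n nonnegative real matrix whose second-largest eigenvalue λ₂(A) (ordering eigenvalues by descending absolute value) is negative and has geometric multiplicity n−1. Then A can be written as A = c(uvᵀ − sI) where u, v are positive vectors in ℝⁿ, 0 ≤ s ≤ minᵢ uᵢvᵢ, and c > 0. -/
open Matrix

/-- Auxiliary sign lemma: if all diagonal products `x i * y i` are positive and all
off-diagonal products are nonnegative, then either both vectors are positive or both
are negative; in either case we can produce positive `u, v` with the same products. -/
lemma exists_pos_vectors_of_products {n : ℕ} (hn : 0 < n) (x y : Fin n → ℝ)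
    (hdiag : ∀ i, 0 < x i * y i) (hoff : ∀ i j, i ≠ j → 0 ≤ x i * y j) :
    ∃ u v : Fin n → ℝ, (∀ i, 0 < u i) ∧ (∀ i, 0 < v i) ∧ ∀ i j, u i * v j = x i * y j := by
  have i0 : Fin n := ⟨0, hn⟩
  have hxne : ∀ i, x i ≠ 0 := fun i h => by
    have := hdiag i; rw [h, zero_mul] at this; exact lt_irrefl 0 this
  set ε : ℝ := if 0 < x i0 then 1 else -1 with hε
  have hε2 : ε * ε = 1 := by
    rcases lt_or_ge 0 (x i0) with h | h
    · simp [hε, h]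
    · simp [hε, not_lt.mpr h]
  refine ⟨ε • x, ε • y, ?_, ?_, ?_⟩
  all_goals try intro i
  · -- 0 < (ε • x) i for all i ; prove positivity of (ε • x) i0 first
    have hu0 : 0 < ε * x i0 := by
      rcases (hxne i0).lt_or_gt with h | h
      · simp only [hε, if_neg (not_lt.mpr h.le)]; linarith
      · simp only [hε, if_pos h]; linarith
    -- v i0 positive
    have hv0 : 0 < ε * y i0 := by
      have h := hdiag i0
      nlinarith
    -- all v j positive
    have hv : ∀ j, 0 < ε * y j := by
      intro j
      rcases eq_or_ne i0 j with rfl | hne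
      · exact hv0
      · have h1 : 0 ≤ x i0 * y j := hoff i0 j hne
        have h2 : 0 ≤ (ε * x i0) * (ε * y j) := by nlinarith
        have hyj : y j ≠ 0 := fun h => by
          have := hdiag j; rw [h, mul_zero] at this; exact lt_irrefl 0 this
        have hεyj : ε * y j ≠ 0 := by
          rcases lt_or_ge 0 (x i0) with h | h
          · simp [hε, h, hyj]
          · simp [hε, not_lt.mpr h, hyj]
        rcases (mul_nonneg_iff_of_pos_left hu0).mp h2 |>.lt_or_eq with h | h
        · exact h
        · exact absurd h.symm hεyj
    have h := hdiag i
    have := hv i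
    have : 0 < (ε * x i) * (ε * y i) := by nlinarith
    simp only [Pi.smul_apply, smul_eq_mul]
    by_contra hcon
    push_neg at hcon
    nlinarith [hv i]
  · -- 0 < (ε • y) i : same argument
    have hu0 : 0 < ε * x i0 := by
      rcases (hxne i0).lt_or_gt with h | h
      · simp only [hε, if_neg (not_lt.mpr h.le)]; linarith
      · simp only [hε, if_pos h]; linarith
    rcases eq_or_ne i0 i with rfl | hne
    · have h := hdiag i0
      simp only [Pi.smul_apply, smul_eq_mul]
      nlinarith
    · have h1 : 0 ≤ x i0 * y i := hoff i0 i hne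
      have h2 : 0 ≤ (ε * x i0) * (ε * y i) := by nlinarith
      have hyj : y i ≠ 0 := fun h => by
        have := hdiag i; rw [h, mul_zero] at this; exact lt_irrefl 0 this
      have hεyj : ε * y i ≠ 0 := by
        rcases lt_or_ge 0 (x i0) with h | h
        · simp [hε, h, hyj]
        · simp [hε, not_lt.mpr h, hyj]
      simp only [Pi.smul_apply, smul_eq_mul]
      rcases (mul_nonneg_iff_of_pos_left hu0).mp h2 |>.lt_or_eq with h | h
      · exact h
      · exact absurd h.symm hεyj
  · intro j
    simp only [Pi.smul_apply, smul_eq_mul]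
    have hr : ε * x i * (ε * y j) = (ε * ε) * (x i * y j) := by ring
    rw [hr, hε2, one_mul]

/-- A nonnegative matrix whose second eigenvalue (by descending absolute
value) is negative with geometric multiplicity `n-1` has the form `c (u vᵀ - s I)`. -/
theorem nonneg_with_neg_eigenvalue_geomMult_pred_is_rankOne_shift
    {n : ℕ} (hn : 2 ≤ n) (A : Matrix (Fin n) (Fin n) ℝ)
    (hA : ∀ i j, 0 ≤ A i j) (μ : ℝ) (hμneg : μ < 0)
    (hμ : μ ∈ spectrum ℝ A)
    (hgeom : Module.finrank ℝ
      (LinearMap.ker (Matrix.mulVecLin (A - μ • (1 : Matrix (Fin n) (Fin n) ℝ)))) = n - 1) :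
    ∃ (c s : ℝ) (u v : Fin n → ℝ), (∀ i, 0 < u i) ∧ (∀ i, 0 < v i) ∧
      0 ≤ s ∧ (∀ i, s ≤ u i * v i) ∧ 0 < c ∧
      A = c • (Matrix.vecMulVec u v - s • (1 : Matrix (Fin n) (Fin n) ℝ)) := by
  set B : Matrix (Fin n) (Fin n) ℝ := A - μ • (1 : Matrix (Fin n) (Fin n) ℝ) with hB
  have hrn := LinearMap.finrank_range_add_finrank_ker (Matrix.mulVecLin B)
  rw [hgeom, Module.finrank_pi] at hrn
  simp only [Fintype.card_fin] at hrn
  have hrank : Module.finrank ℝ (LinearMap.range (Matrix.mulVecLin B)) = 1 := by omega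
  obtain ⟨x0, hx0ne, hx0⟩ := finrank_eq_one_iff'.mp hrank
  set x : Fin n → ℝ := (x0 : Fin n → ℝ) with hxdef
  have hxcol : ∀ j : Fin n, ∃ c : ℝ, ∀ i, c * x i = B i j := by
    intro j
    have hmem : B *ᵥ Pi.single j 1 ∈ LinearMap.range (Matrix.mulVecLin B) :=
      ⟨Pi.single j 1, rfl⟩
    obtain ⟨c, hc⟩ := hx0 ⟨_, hmem⟩
    refine ⟨c, fun i => ?_⟩
    have h1 : ((c • x0 : LinearMap.range (Matrix.mulVecLin B)) : Fin n → ℝ)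
        = B *ᵥ Pi.single j 1 := congrArg Subtype.val hc
    have := congrFun h1 i
    simpa [hxdef] using this
  choose y hy using hxcol
  have hBxy : ∀ i j, B i j = x i * y j := fun i j => by rw [← hy j i]; ring
  have hAij : ∀ i j, A i j = x i * y j + (if i = j then μ else 0) := by
    intro i j
    have h : B i j = A i j - (if i = j then μ else 0) := by
      simp [hB, Matrix.one_apply, mul_ite]
    rw [hBxy] at h
    linarith [h]
  have hdiag : ∀ i, 0 < x i * y i := by
    intro i
    have h := hA i i
    rw [hAij i i, if_pos rfl] at h
    linarith
  have hoff : ∀ i j, i ≠ j → 0 ≤ x i * y j := by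
    intro i j hij
    have h := hA i j
    rw [hAij i j, if_neg hij, add_zero] at h
    exact h
  obtain ⟨u, v, hu, hv, huv⟩ := exists_pos_vectors_of_products (by omega) x y hdiag hoff
  refine ⟨1, -μ, u, v, hu, hv, by linarith, ?_, one_pos, ?_⟩
  · intro i
    have h := hA i i
    rw [hAij i i, if_pos rfl] at h
    rw [huv i i]
    linarith
  · ext i j
    simp only [one_smul, Matrix.sub_apply, Matrix.vecMulVec_apply, Matrix.smul_apply,
      Matrix.one_apply, smul_eq_mul, mul_ite, mul_one, mul_zero]
    rw [hAij i j, huv i j]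
    rcases eq_or_ne i j with rfl | h
    · simp
    · simp [h]
end

section
/- Let n ≥ 3 and let A be an n×n nonnegative matrix having a negative eigenvalue of geometric multiplicity n−1. Then A is not similar (over the reals) to any nonnegative upper Hessenberg matrix. -/
open Matrix

/-- For `n ≥ 3`, a nonnegative matrix with a negative eigenvalue of
geometric multiplicity `n-1` is not similar to any nonnegative upper Hessenberg matrix. -/
theorem not_similar_nonneg_hessenberg_of_neg_eigenvalue_geomMult_pred
    {n : ℕ} (hn : 3 ≤ n) (A : Matrix (Fin n) (Fin n) ℝ)
    (hA : ∀ i j, 0 ≤ A i j) (μ : ℝ) (hμneg : μ < 0) (hμ : μ ∈ spectrum ℝ A)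
    (hgeom : Module.finrank ℝ
      (LinearMap.ker (Matrix.mulVecLin (A - μ • (1 : Matrix (Fin n) (Fin n) ℝ)))) = n - 1) :
    ¬ ∃ (B T : Matrix (Fin n) (Fin n) ℝ), T.det ≠ 0 ∧ T⁻¹ * A * T = B ∧
        (∀ i j, 0 ≤ B i j) ∧ (∀ i j : Fin n, (j : ℕ) + 1 < (i : ℕ) → B i j = 0) := by
  rintro ⟨B, T, hT, hBT, hBnn, hHess⟩
  have hTu : IsUnit T.det := isUnit_iff_ne_zero.mpr hT
  set N : Matrix (Fin n) (Fin n) ℝ := A - μ • 1 with hN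
  -- rank of N is 1
  have hrn : N.rank = 1 := by
    have h1 := LinearMap.finrank_range_add_finrank_ker N.mulVecLin
    rw [hgeom] at h1
    have h2 : Module.finrank ℝ (Fin n → ℝ) = n := by simp
    rw [h2] at h1
    have : N.rank = Module.finrank ℝ (LinearMap.range N.mulVecLin) := rfl
    omega
  set M : Matrix (Fin n) (Fin n) ℝ := B - μ • 1 with hM
  have hMN : M = T⁻¹ * N * T := by
    have hinv : T⁻¹ * T = 1 := nonsing_inv_mul T hTu
    rw [hM, hN, ← hBT]
    rw [Matrix.mul_sub, Matrix.sub_mul]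
    congr 1
    rw [Matrix.mul_smul, Matrix.smul_mul, Matrix.mul_one, hinv]
  have hrm : M.rank = 1 := by
    rw [hMN, rank_mul_eq_left_of_isUnit_det _ _ hTu,
      rank_mul_eq_right_of_isUnit_det _ _ (by simpa using hTu)]
    exact hrn
  -- extract rank-one structure: there is u spanning the range
  rw [Matrix.rank] at hrm
  obtain ⟨⟨u, hu_mem⟩, hu0, hspan⟩ := (finrank_eq_one_iff' (K := ℝ)
    (V := LinearMap.range M.mulVecLin)).mp hrm
  -- columns of M are multiples of u
  have hcol : ∀ j : Fin n, ∃ c : ℝ, ∀ i, M i j = c * u i := by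
    intro j
    have hmem : M.mulVec (Pi.single j 1) ∈ LinearMap.range M.mulVecLin :=
      ⟨Pi.single j 1, rfl⟩
    obtain ⟨c, hc⟩ := hspan ⟨_, hmem⟩
    refine ⟨c, fun i => ?_⟩
    have := congrFun (congrArg Subtype.val hc) i
    simp only [Submodule.coe_smul, Pi.smul_apply, smul_eq_mul] at this
    simpa [Matrix.mulVec_single] using this.symm
  choose c hc using hcol
  -- diagonal entries of M are positive
  have hdiag : ∀ i : Fin n, 0 < c i * u i := by
    intro i
    have : M i i = B i i - μ := by simp [hM, Matrix.sub_apply, Matrix.one_apply]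
    have hpos : 0 < M i i := by
      rw [this]; have := hBnn i i; linarith
    rw [hc i i] at hpos; exact hpos
  -- but M 2 0 = 0 since B is Hessenberg and 2 ≠ 0
  have h2 : (2 : ℕ) < n := by omega
  set i2 : Fin n := ⟨2, h2⟩
  set j0 : Fin n := ⟨0, by omega⟩
  have hM20 : M i2 j0 = 0 := by
    have hB : B i2 j0 = 0 := hHess i2 j0 (by simp [i2, j0])
    simp [hM, Matrix.sub_apply, Matrix.one_apply, hB, show i2 ≠ j0 by simp [i2, j0, Fin.ext_iff]]
  rw [hc j0 i2] at hM20
  have h1 := hdiag i2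
  have h0 := hdiag j0
  rcases mul_eq_zero.mp hM20 with h | h
  · rw [h] at h0; simp at h0
  · rw [h] at h1; simp at h1
end

section
/- Let A be an irreducible n×n nonnegative matrix and b a nonnegative vector in ℝⁿ with Ab ≠ λ₁(A)b, where λ₁(A) is the Perron root. Then there exists a nonnegative invertible matrix T with T⁻¹AT = A and T⁻¹b lying on the boundary of the nonnegative orthant (i.e., T⁻¹b is nonnegative with some zero coordinate). -/
open Matrix

def Matrix.IsIrreducible' {n : ℕ} (A : Matrix (Fin n) (Fin n) ℝ) : Prop :=
  ¬ ∃ (σ : Equiv.Perm (Fin n)) (k : ℕ), 0 < k ∧ k < n ∧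
      ∀ i j : Fin n, k ≤ (i : ℕ) → (j : ℕ) < k → A (σ i) (σ j) = 0

/-!
Perron–Frobenius gives positive vectors `v`, `u` with `A v = ρ v` and `uᵀ A = ρ uᵀ`, so the
rank-one projection `P = v uᵀ / (u ⬝ v)` is nonnegative and commutes with `A`, and so does every
`T = (1 - γ) I + γ P`, whose inverse is `(1 - γ)⁻¹ (I - γ P)`. As `P b` is a positive multiple of
`v`, `T⁻¹ b` is a positive multiple of `b - γ P b`, which the largest `γ` with `γ P b ≤ b` puts on
the boundary. This `γ` is below `1`: otherwise `P b ≤ b` and `u ⬝ P b = u ⬝ b` force `P b = b`,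
making `b` an eigenvector for `ρ`.

For Perron–Frobenius itself, a real eigenvector `w` for `ρ` gives `ρ |w| ≤ A |w|`. If this is
strict somewhere, a power of `1 + A`, which irreducibility makes positive on nonzero nonnegative
vectors, turns it into `(ρ + ε) y ≤ A y` with `y > 0`; Gelfand's formula then pushes the spectral
radius above `ρ`.
-/

open Finset Filter Topology

lemma Finset.exists_perm_mem_iff_lt_card {n : ℕ} (S : Finset (Fin n)) :
    ∃ σ : Equiv.Perm (Fin n), ∀ j, σ j ∈ S ↔ (j : ℕ) < #S := by
  have hcard : #S + #Sᶜ = n := by simp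
  refine ⟨(finCongr hcard.symm).trans (finSumFinEquiv.symm.trans (finSumEquivOfFinset rfl rfl)),
    fun j => ?_⟩
  obtain ⟨j, rfl⟩ := (finCongr hcard).surjective j
  induction j using Fin.addCases with
  | left j => simp [Finset.orderEmbOfFin_mem]
  | right j => simpa using Finset.mem_compl.1 (Finset.orderEmbOfFin_mem Sᶜ rfl j)

lemma exists_pos_smul_le {ι : Type*} [Finite ι] (y : ι → ℝ) {z : ι → ℝ} (hz : ∀ i, 0 < z i) :
    ∃ ε : ℝ, 0 < ε ∧ ε • y ≤ z := by
  have h (i : ι) : ∀ᶠ ε in 𝓝 (0 : ℝ), ε * y i < z i :=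
    (continuous_id.mul continuous_const).tendsto' 0 0 (zero_mul _) |>.eventually_lt_const (hz i)
  obtain ⟨ε, hε, hε0⟩ :=
    ((eventually_all.2 h).filter_mono nhdsWithin_le_nhds |>.and self_mem_nhdsWithin).exists
      (f := 𝓝[>] (0 : ℝ))
  exact ⟨ε, hε0, fun i => (hε i).le⟩

lemma IsIdempotentElem.one_sub_smul_add_smul_mul_eq_one {K R : Type*} [Field K] [Ring R]
    [Algebra K R] {p : R} (hp : IsIdempotentElem p) {γ : K} (hγ : γ ≠ 1) :
    ((1 - γ) • 1 + γ • p) * ((1 - γ)⁻¹ • (1 - γ • p)) = 1 := by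
  have : 1 - γ ≠ 0 := sub_ne_zero.2 hγ.symm
  simp only [mul_smul_comm, smul_mul_assoc, add_mul, mul_sub, mul_one, one_mul, hp.eq]
  match_scalars <;> field_simp; ring

lemma eq_of_le_of_dotProduct_eq {ι : Type*} [Fintype ι] {u x y : ι → ℝ} (hu : ∀ i, 0 < u i)
    (hxy : x ≤ y) (h : u ⬝ᵥ x = u ⬝ᵥ y) : x = y := by
  funext i
  have hterm := (Finset.sum_eq_sum_iff_of_le fun j _ =>
    mul_le_mul_of_nonneg_left (hxy j) (hu j).le).1 h i (mem_univ i)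
  exact mul_left_cancel₀ (hu i).ne' hterm

lemma exists_max_smul_le {ι : Type*} [Fintype ι] [Nonempty ι] {w : ι → ℝ} (hw : ∀ i, 0 < w i)
    (b : ι → ℝ) : ∃ γ : ℝ, γ • w ≤ b ∧ ∃ i, γ * w i = b i := by
  obtain ⟨i, -, hi⟩ := exists_min_image univ (fun i => b i / w i) univ_nonempty
  exact ⟨b i / w i, fun j => (le_div_iff₀ (hw j)).1 (hi j (mem_univ j)), i,
    div_mul_cancel₀ _ (hw i).ne'⟩

lemma spectralRadius_le_ofReal_of_forall_norm_le {𝕜 R : Type*} [NormedField 𝕜] [Ring R]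
    [Algebra 𝕜 R] {a : R} {r : ℝ} (h : ∀ μ ∈ spectrum 𝕜 a, ‖μ‖ ≤ r) :
    spectralRadius 𝕜 a ≤ ENNReal.ofReal r :=
  iSup₂_le fun μ hμ => by
    rw [← enorm_eq_nnnorm, ← ofReal_norm]
    exact ENNReal.ofReal_le_ofReal (h μ hμ)

namespace Matrix

variable {ι : Type*}

def IsStronglyConnected (A : Matrix ι ι ℝ) : Prop :=
  ∀ S : Set ι, S.Nonempty → (∀ i ∉ S, ∀ j ∈ S, A i j = 0) → S = Set.univ

lemma IsIrreducible'.isStronglyConnected {n : ℕ} {A : Matrix (Fin n) (Fin n) ℝ}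
    (hirr : A.IsIrreducible') : A.IsStronglyConnected := by
  classical
  intro S hne hclosed
  by_contra hS
  obtain ⟨σ, hσ⟩ := S.toFinset.exists_perm_mem_iff_lt_card
  refine hirr ⟨σ, #S.toFinset, Finset.card_pos.2 (Set.toFinset_nonempty.2 hne), ?_,
    fun i j hi hj => hclosed _ ?_ _ ?_⟩
  · simpa using (Finset.card_lt_iff_ne_univ S.toFinset).2 (by simpa using hS)
  · simpa using (hσ i).not.2 (by omega)
  · simpa using (hσ j).2 hj

lemma IsStronglyConnected.transpose {A : Matrix ι ι ℝ} (hirr : A.IsStronglyConnected) :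
    Aᵀ.IsStronglyConnected := by
  intro S hne hclosed
  by_contra hS
  have := hirr Sᶜ (Set.nonempty_compl.2 hS) fun i hi j hj => hclosed j hj i (not_not.1 hi)
  simp_all

variable [Fintype ι]

section RankOneProj

variable {K : Type*} [Field K] {u v : ι → K}

def rankOneProj (u v : ι → K) : Matrix ι ι K := (u ⬝ᵥ v)⁻¹ • vecMulVec v u

lemma rankOneProj_mulVec (x : ι → K) : rankOneProj u v *ᵥ x = ((u ⬝ᵥ v)⁻¹ * (u ⬝ᵥ x)) • v := by
  rw [rankOneProj, smul_mulVec, vecMulVec_mulVec, op_smul_eq_smul, smul_smul]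

lemma vecMul_rankOneProj (h : u ⬝ᵥ v ≠ 0) : u ᵥ* rankOneProj u v = u := by
  rw [rankOneProj, vecMul_smul, vecMul_vecMulVec, smul_smul, inv_mul_cancel₀ h, one_smul]

lemma isIdempotentElem_rankOneProj (h : u ⬝ᵥ v ≠ 0) : IsIdempotentElem (rankOneProj u v) := by
  rw [IsIdempotentElem, rankOneProj, smul_mul_smul, vecMulVec_mul_vecMulVec, vecMulVec_smul,
    smul_smul, mul_assoc, inv_mul_cancel₀ h, mul_one]

lemma mul_rankOneProj {M : Matrix ι ι K} {ρ : K} (hMv : M *ᵥ v = ρ • v) :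
    M * rankOneProj u v = ρ • rankOneProj u v := by
  rw [rankOneProj, mul_smul_comm, mul_vecMulVec, hMv, smul_vecMulVec, smul_comm]

lemma rankOneProj_mul {M : Matrix ι ι K} {ρ : K} (huM : u ᵥ* M = ρ • u) :
    rankOneProj u v * M = ρ • rankOneProj u v := by
  rw [rankOneProj, smul_mul_assoc, vecMulVec_mul, huM, vecMulVec_smul, smul_comm]

end RankOneProj

variable {A : Matrix ι ι ℝ}

lemma mulVec_nonneg_of_nonneg (hA : ∀ i j, 0 ≤ A i j) {x : ι → ℝ} (hx : 0 ≤ x) :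
    0 ≤ A *ᵥ x :=
  fun i => dotProduct_nonneg_of_nonneg (hA i) hx

lemma mulVec_mono_of_nonneg (hA : ∀ i j, 0 ≤ A i j) {x y : ι → ℝ} (h : x ≤ y) :
    A *ᵥ x ≤ A *ᵥ y :=
  fun i => dotProduct_le_dotProduct_of_nonneg_left h (hA i)

lemma IsStronglyConnected.pos_of_mulVec_apply_eq_zero (hirr : A.IsStronglyConnected)
    (hA : ∀ i j, 0 ≤ A i j) {x : ι → ℝ} (hx : 0 ≤ x) (hx0 : x ≠ 0)
    (h : ∀ i, x i = 0 → (A *ᵥ x) i = 0) : ∀ i, 0 < x i := by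
  have hsupp : Function.support x = Set.univ := by
    refine hirr _ (Function.support_nonempty_iff.2 hx0) fun i hi j hj => ?_
    have hsum := h i (Function.notMem_support.1 hi)
    rw [mulVec, dotProduct,
      Finset.sum_eq_zero_iff_of_nonneg fun k _ => mul_nonneg (hA i k) (hx k)] at hsum
    exact (mul_eq_zero.1 (hsum j (mem_univ j))).resolve_right hj
  exact fun i => (hx i).lt_of_ne' (Set.eq_univ_iff_forall.1 hsupp i)

variable [DecidableEq ι]

lemma IsStronglyConnected.eventually_pos_one_add_pow_mulVec (hirr : A.IsStronglyConnected)
    (hA : ∀ i j, 0 ≤ A i j) {x : ι → ℝ} (hx : 0 ≤ x) (hx0 : x ≠ 0) :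
    ∀ᶠ k in atTop, ∀ i, 0 < ((1 + A) ^ k *ᵥ x) i := by
  set y : ℕ → ι → ℝ := fun k => (1 + A) ^ k *ᵥ x
  have hy_succ (k : ℕ) : y (k + 1) = y k + A *ᵥ y k := by
    simp only [y, pow_succ', ← mulVec_mulVec, add_mulVec, one_mulVec]
  have hy_nonneg (k : ℕ) : 0 ≤ y k := by
    induction k with
    | zero => simpa [y] using hx
    | succ k ih => rw [hy_succ]; exact add_nonneg ih (mulVec_nonneg_of_nonneg hA ih)
  have hy_mono : Monotone y := monotone_nat_of_le_succ fun k => by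
    rw [hy_succ]; exact le_add_of_nonneg_right (mulVec_nonneg_of_nonneg hA (hy_nonneg k))
  have hsupp_mono : Monotone fun k => Function.support (y k) := fun k l hkl i hi =>
    ((hy_nonneg k i).lt_of_ne' hi |>.trans_le (hy_mono hkl i)).ne'
  obtain ⟨N, hN⟩ := WellFoundedGT.monotone_chain_condition ⟨_, hsupp_mono⟩
  have hyN : y N ≠ 0 := fun h => hx0 <| le_antisymm (by simpa [h, y] using hy_mono N.zero_le) hx
  have hpos := hirr.pos_of_mulVec_apply_eq_zero hA (hy_nonneg N) hyN fun i hi => by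
    have hi' : y (N + 1) i = 0 := by
      simpa using (Set.ext_iff.1 (hN (N + 1) N.le_succ) i).not.1 (by simpa using hi)
    simpa [hy_succ, hi] using hi'
  filter_upwards [eventually_ge_atTop N] with k hk i using (hpos i).trans_le (hy_mono hk i)

lemma spectrum_transpose {K : Type*} [Field K] (M : Matrix ι ι K) :
    spectrum K Mᵀ = spectrum K M := by
  ext μ
  simp only [mem_spectrum_iff_isRoot_charpoly, charpoly_transpose]

lemma ofReal_mem_spectrum_map {μ : ℝ} (h : μ ∈ spectrum ℝ A) :
    (μ : ℂ) ∈ spectrum ℂ (A.map (fun x : ℝ => (x : ℂ))) := by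
  rw [mem_spectrum_iff_isRoot_charpoly] at h ⊢
  have := h.map (f := Complex.ofRealHom)
  rw [← charpoly_map] at this
  exact this

lemma pow_smul_le_pow_mulVec (hA : ∀ i j, 0 ≤ A i j) {y : ι → ℝ} {c : ℝ} (hc : 0 ≤ c)
    (h : c • y ≤ A *ᵥ y) (k : ℕ) : c ^ k • y ≤ A ^ k *ᵥ y := by
  induction k with
  | zero => simp
  | succ k ih =>
    calc c ^ (k + 1) • y = c ^ k • (c • y) := by rw [pow_succ, mul_smul]
      _ ≤ c ^ k • (A *ᵥ y) := smul_le_smul_of_nonneg_left h (by positivity)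
      _ = A *ᵥ (c ^ k • y) := (mulVec_smul ..).symm
      _ ≤ A *ᵥ (A ^ k *ᵥ y) := mulVec_mono_of_nonneg hA ih
      _ = A ^ (k + 1) *ᵥ y := by rw [mulVec_mulVec, pow_succ']

section Gelfand

attribute [local instance] Matrix.linftyOpNormedAddCommGroup Matrix.linftyOpNormedRing
  Matrix.linftyOpNormedAlgebra

lemma pow_le_norm_map_pow_of_smul_le_mulVec (hA : ∀ i j, 0 ≤ A i j) {y : ι → ℝ} (hy : 0 ≤ y)
    (hy0 : y ≠ 0) {c : ℝ} (hc : 0 ≤ c) (h : c • y ≤ A *ᵥ y) (k : ℕ) :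
    c ^ k ≤ ‖A.map (fun x : ℝ => (x : ℂ)) ^ k‖ := by
  have hpow := pow_smul_le_pow_mulVec hA hc h k
  have hcomplex (x : ι → ℝ) : ‖fun i => (x i : ℂ)‖ = ‖x‖ := by simp [Pi.norm_def]
  have hmap : A.map (fun x : ℝ => (x : ℂ)) ^ k *ᵥ (fun i => (y i : ℂ)) =
      fun i => ((A ^ k *ᵥ y) i : ℂ) := by
    ext i
    rw [show A.map (fun x : ℝ => (x : ℂ)) ^ k = (A ^ k).map Complex.ofRealHom from
      (Matrix.map_pow A Complex.ofRealHom k).symm]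
    exact (Complex.ofRealHom.map_mulVec (A ^ k) y i).symm
  refine le_of_mul_le_mul_right ?_ (norm_pos_iff.2 hy0)
  calc c ^ k * ‖y‖ = ‖c ^ k • y‖ := by rw [norm_smul, Real.norm_of_nonneg (by positivity)]
    _ ≤ ‖A ^ k *ᵥ y‖ := by
      refine (pi_norm_le_iff_of_nonneg (norm_nonneg _)).2 fun i => ?_
      refine le_trans ?_ (norm_le_pi_norm _ i)
      have hi : 0 ≤ (c ^ k • y) i := smul_nonneg (by positivity) hy i
      rw [Real.norm_of_nonneg hi, Real.norm_of_nonneg (hi.trans (hpow i))]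
      exact hpow i
    _ = ‖A.map (fun x : ℝ => (x : ℂ)) ^ k *ᵥ (fun i => (y i : ℂ))‖ := by rw [hmap, hcomplex]
    _ ≤ ‖A.map (fun x : ℝ => (x : ℂ)) ^ k‖ * ‖y‖ := by
      rw [← hcomplex y]
      exact linfty_opNorm_mulVec _ _

lemma ofReal_le_spectralRadius_of_smul_le_mulVec (hA : ∀ i j, 0 ≤ A i j)
    {y : ι → ℝ} (hy : 0 ≤ y) (hy0 : y ≠ 0) {c : ℝ} (h : c • y ≤ A *ᵥ y) :
    ENNReal.ofReal c ≤ spectralRadius ℂ (A.map (fun x : ℝ => (x : ℂ))) := by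
  rcases le_or_gt c 0 with hc | hc
  · simp [ENNReal.ofReal_of_nonpos hc]
  refine ge_of_tendsto (spectrum.pow_nnnorm_pow_one_div_tendsto_nhds_spectralRadius _) ?_
  filter_upwards [eventually_ne_atTop 0] with k hk
  calc ENNReal.ofReal c = (ENNReal.ofReal c ^ k) ^ (1 / (k : ℝ)) := by
        rw [one_div, ENNReal.pow_rpow_inv_natCast hk]
    _ ≤ _ := by
      gcongr
      rw [← ENNReal.ofReal_pow hc.le, ← enorm_eq_nnnorm, ← ofReal_norm]
      exact ENNReal.ofReal_le_ofReal
        (pow_le_norm_map_pow_of_smul_le_mulVec hA hy hy0 hc.le h k)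

end Gelfand

lemma IsStronglyConnected.mulVec_eq_smul_of_smul_le_mulVec (hirr : A.IsStronglyConnected)
    (hA : ∀ i j, 0 ≤ A i j) {ρ : ℝ} (hρ0 : 0 ≤ ρ)
    (hρmax : ∀ μ ∈ spectrum ℂ (A.map (fun x : ℝ => (x : ℂ))), ‖μ‖ ≤ ρ) {x : ι → ℝ}
    (hx : 0 ≤ x) (hx0 : x ≠ 0) (hsub : ρ • x ≤ A *ᵥ x) : A *ᵥ x = ρ • x := by
  by_contra hne
  set z := A *ᵥ x - ρ • x
  obtain ⟨k, hBx, hBz⟩ :=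
    ((hirr.eventually_pos_one_add_pow_mulVec hA hx hx0).and
      (hirr.eventually_pos_one_add_pow_mulVec hA (sub_nonneg.2 hsub) (sub_ne_zero.2 hne))).exists
  set B := (1 + A) ^ k
  have hAB : A * B = B * A := ((Commute.one_right A).add_right (Commute.refl A)).pow_right k
  have hAy : A *ᵥ (B *ᵥ x) = ρ • (B *ᵥ x) + B *ᵥ z := by
    simp only [z, mulVec_sub, mulVec_smul, mulVec_mulVec, hAB]
    abel
  obtain ⟨ε, hε, hεy⟩ := exists_pos_smul_le (B *ᵥ x) hBz
  have hy0 : B *ᵥ x ≠ 0 := by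
    obtain ⟨i, -⟩ := Function.ne_iff.1 hx0
    exact fun h => (hBx i).ne' (congrFun h i)
  have hlow := ofReal_le_spectralRadius_of_smul_le_mulVec hA (fun i => (hBx i).le) hy0
    (c := ρ + ε) (by rw [add_smul, hAy]; exact add_le_add_right hεy _)
  have := (ENNReal.ofReal_le_ofReal_iff hρ0).1
    (hlow.trans (spectralRadius_le_ofReal_of_forall_norm_le hρmax))
  linarith

theorem IsStronglyConnected.exists_pos_mulVec_eq_smul (hirr : A.IsStronglyConnected)
    (hA : ∀ i j, 0 ≤ A i j) {ρ : ℝ} (hρ : ρ ∈ spectrum ℝ A)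
    (hρmax : ∀ μ ∈ spectrum ℂ (A.map (fun x : ℝ => (x : ℂ))), ‖μ‖ ≤ ρ) :
    ∃ v : ι → ℝ, (∀ i, 0 < v i) ∧ A *ᵥ v = ρ • v := by
  have hρ0 : 0 ≤ ρ := by
    simpa using (abs_nonneg ρ).trans (by simpa using hρmax _ (ofReal_mem_spectrum_map hρ))
  obtain ⟨w, hw, hw0⟩ : ∃ w, A *ᵥ w = ρ • w ∧ w ≠ 0 := by
    rw [← spectrum_toLin', ← Module.End.hasEigenvalue_iff_mem_spectrum] at hρ
    obtain ⟨w, hw⟩ := hρ.exists_hasEigenvector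
    exact ⟨w, by simpa using Module.End.mem_eigenspace_iff.1 hw.1, hw.2⟩
  have habs : 0 ≤ |w| := abs_nonneg w
  have habs0 : |w| ≠ 0 := fun h => hw0 <| funext fun i => abs_eq_zero.1 (congrFun h i)
  have hsub : ρ • |w| ≤ A *ᵥ |w| := fun i => by
    calc ρ * |w i| = |(A *ᵥ w) i| := by
          rw [hw, Pi.smul_apply, smul_eq_mul, abs_mul, abs_of_nonneg hρ0]
      _ ≤ (A *ᵥ |w|) i := (abs_sum_le_sum_abs _ _).trans <|
          sum_le_sum fun j _ => by rw [abs_mul, abs_of_nonneg (hA i j), Pi.abs_apply]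
  have heq := hirr.mulVec_eq_smul_of_smul_le_mulVec hA hρ0 hρmax habs habs0 hsub
  exact ⟨|w|, hirr.pos_of_mulVec_apply_eq_zero hA habs habs0 fun i hi => by simp [heq, hi], heq⟩

theorem exists_nonneg_similarity_of_pos_eigenvectors {ρ : ℝ} {u v b : ι → ℝ}
    (hu : ∀ i, 0 < u i) (hv : ∀ i, 0 < v i) (huA : u ᵥ* A = ρ • u) (hAv : A *ᵥ v = ρ • v)
    (hb : 0 ≤ b) (hbe : A *ᵥ b ≠ ρ • b) :
    ∃ T : Matrix ι ι ℝ, (∀ i j, 0 ≤ T i j) ∧ T.det ≠ 0 ∧ T⁻¹ * A * T = A ∧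
      (∀ i, 0 ≤ (T⁻¹ *ᵥ b) i) ∧ ∃ i, (T⁻¹ *ᵥ b) i = 0 := by
  obtain ⟨i₀, hi₀⟩ : ∃ i, b i ≠ 0 := Function.ne_iff.1 fun h => hbe <| by
    rw [show b = 0 from h, mulVec_zero, smul_zero]
  have huv : 0 < u ⬝ᵥ v := sum_pos (fun i _ => mul_pos (hu i) (hv i)) ⟨i₀, mem_univ _⟩
  have hub : 0 < u ⬝ᵥ b := sum_pos' (fun i _ => mul_nonneg (hu i).le (hb i))
    ⟨i₀, mem_univ _, mul_pos (hu i₀) ((hb i₀).lt_of_ne' hi₀)⟩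
  set P := rankOneProj u v
  have hP : ∀ i j, 0 ≤ P i j := fun i j =>
    mul_nonneg (inv_nonneg.2 huv.le) (mul_pos (hv i) (hu j)).le
  have hAP : A * P = ρ • P := mul_rankOneProj hAv
  have hPb : ∀ i, 0 < (P *ᵥ b) i := fun i => by
    rw [rankOneProj_mulVec]
    exact mul_pos (mul_pos (inv_pos.2 huv) hub) (hv i)
  have : Nonempty ι := ⟨i₀⟩
  obtain ⟨γ, hγ, i, hi⟩ := exists_max_smul_le hPb b
  have hγ0 : 0 ≤ γ := nonneg_of_mul_nonneg_left (hi ▸ hb i) (hPb i)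
  have hγ1 : γ < 1 := by
    by_contra! h
    have hPb_eq : P *ᵥ b = b := eq_of_le_of_dotProduct_eq hu
      (fun j => (le_mul_of_one_le_left (hPb j).le h).trans (hγ j))
      (by rw [dotProduct_mulVec, vecMul_rankOneProj huv.ne'])
    exact hbe (by rw [← hPb_eq, mulVec_mulVec, hAP, smul_mulVec])
  set T := (1 - γ) • (1 : Matrix ι ι ℝ) + γ • P
  have hT_mul := (isIdempotentElem_rankOneProj huv.ne').one_sub_smul_add_smul_mul_eq_one hγ1.ne
  have hT_det : IsUnit T.det := isUnit_det_of_right_inverse hT_mul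
  have hAT : Commute A T := ((Commute.one_right A).smul_right _).add_right
    ((show Commute A P from hAP.trans (rankOneProj_mul huA).symm).smul_right γ)
  have hTb : T⁻¹ *ᵥ b = (1 - γ)⁻¹ • (b - γ • P *ᵥ b) := by
    rw [inv_eq_right_inv hT_mul, smul_mulVec, sub_mulVec, one_mulVec, smul_mulVec]
  refine ⟨T, fun j k => ?_, hT_det.ne_zero, ?_, fun j => ?_, i, ?_⟩
  · have := hP j k
    simp only [T, add_apply, smul_apply, one_apply, smul_eq_mul]
    split_ifs <;> nlinarith
  · rw [mul_assoc, hAT.eq, ← mul_assoc, nonsing_inv_mul _ hT_det, one_mul]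
  · rw [hTb]
    exact mul_nonneg (inv_nonneg.2 (sub_pos.2 hγ1).le) (sub_nonneg.2 (hγ j))
  · simp [hTb, hi]

end Matrix

/-- If `A` is irreducible nonnegative, `b ≥ 0` and `A b ≠ λ₁(A) b` (where
`ρ = λ₁(A)` is the Perron root), then there is a nonnegative invertible `T` with
`T⁻¹ A T = A` and `T⁻¹ b` on the boundary of the nonnegative orthant. -/
theorem exists_nonneg_similarity_fixing_A_pushing_b_to_boundary
    {n : ℕ} (A : Matrix (Fin n) (Fin n) ℝ) (hA : ∀ i j, 0 ≤ A i j)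
    (hirr : A.IsIrreducible') (b : Fin n → ℝ) (hb : ∀ i, 0 ≤ b i)
    (ρ : ℝ) (hρ : ρ ∈ spectrum ℝ A)
    (hρmax : ∀ μ ∈ spectrum ℂ (A.map (fun x : ℝ => (x : ℂ))), ‖μ‖ ≤ ρ)
    (hbe : A.mulVec b ≠ ρ • b) :
    ∃ T : Matrix (Fin n) (Fin n) ℝ, (∀ i j, 0 ≤ T i j) ∧ T.det ≠ 0 ∧
      T⁻¹ * A * T = A ∧ (∀ i, 0 ≤ (T⁻¹.mulVec b) i) ∧ ∃ i, (T⁻¹.mulVec b) i = 0 := by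
  have hconn := hirr.isStronglyConnected
  obtain ⟨v, hv, hAv⟩ := hconn.exists_pos_mulVec_eq_smul hA hρ hρmax
  obtain ⟨u, hu, hAu⟩ := hconn.transpose.exists_pos_mulVec_eq_smul (fun i j => hA j i)
    (by rwa [spectrum_transpose]) (by rwa [transpose_map, spectrum_transpose])
  rw [mulVec_transpose] at hAu
  exact exists_nonneg_similarity_of_pos_eigenvectors hu hv hAu hAv hb hbe
end

section
/- Let A be a primitive n×n nonnegative matrix and b a positive vector in ℝⁿ with Ab ≠ λ₁(A)b. Then there exists k ∈ ℕ such that A^{−k}b does not lie in the interior of the cone generated by the columns of A (assuming A is invertible, e.g. after replacing A by A + kI for large k). -/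
/-!
If all backward iterates `y k = A⁻ᵏ b` were positive, then `A ^ m *ᵥ y (k + m) = y k` with
`A ^ m` entrywise positive. Birkhoff's contraction says that a positive matrix shrinks the
oscillation `max_i - min_i` of the ratios `(A *ᵥ y k) i / y k i` by a fixed factor `1 - δ / M < 1`,
while this oscillation stays bounded in `k`; so it vanishes at `k = 0`, i.e. `A *ᵥ b = t • b`.
A positive eigenvector of a nonnegative matrix belongs to the dominant eigenvalue, so `t = ρ`.
-/

open Filter Matrix Topology

theorem exists_eq_smul_of_forall_smul_le_le_smul {ι : Type*} [Nonempty ι] {u v : ι → ℝ}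
    (hv : ∀ i, 0 < v i) {c : ℕ → ℝ} (hc : Tendsto c atTop (𝓝 0))
    (h : ∀ k, ∃ α β : ℝ, α • v ≤ u ∧ u ≤ β • v ∧ β - α ≤ c k) : ∃ t : ℝ, u = t • v := by
  obtain ⟨i₀⟩ := ‹Nonempty ι›
  refine ⟨u i₀ / v i₀, funext fun i => ?_⟩
  have hratio : ∀ k, |u i / v i - u i₀ / v i₀| ≤ c k := by
    intro k
    obtain ⟨α, β, hα, hβ, hαβ⟩ := h k
    have bounds : ∀ j, α ≤ u j / v j ∧ u j / v j ≤ β := fun j =>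
      ⟨(le_div_iff₀ (hv j)).mpr (hα j), (div_le_iff₀ (hv j)).mpr (hβ j)⟩
    rw [abs_le]
    constructor <;> linarith [bounds i, bounds i₀]
  have hratio_eq := abs_nonpos_iff.mp (ge_of_tendsto' hc hratio)
  rw [sub_eq_zero, div_eq_iff (hv i).ne'] at hratio_eq
  rw [hratio_eq, Pi.smul_apply, smul_eq_mul]

namespace Matrix

variable {ι : Type*} [Fintype ι]

theorem mulVec_nonneg {B : Matrix ι ι ℝ} (hB : ∀ i j, 0 ≤ B i j) {w : ι → ℝ} (hw : 0 ≤ w) :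
    0 ≤ B *ᵥ w := fun i =>
  Finset.sum_nonneg fun j _ => mul_nonneg (hB i j) (hw j)

theorem mul_sum_le_mulVec_apply {B : Matrix ι ι ℝ} {δ : ℝ} (hB : ∀ i j, δ ≤ B i j)
    {w : ι → ℝ} (hw : 0 ≤ w) (i : ι) : δ * ∑ j, w j ≤ (B *ᵥ w) i := by
  rw [Finset.mul_sum]
  exact Finset.sum_le_sum fun j _ => mul_le_mul_of_nonneg_right (hB i j) (hw j)

theorem mulVec_apply_le_mul_sum {B : Matrix ι ι ℝ} {M : ℝ} (hB : ∀ i j, B i j ≤ M)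
    {w : ι → ℝ} (hw : 0 ≤ w) (i : ι) : (B *ᵥ w) i ≤ M * ∑ j, w j := by
  rw [Finset.mul_sum]
  exact Finset.sum_le_sum fun j _ => mul_le_mul_of_nonneg_right (hB i j) (hw j)

theorem div_smul_mulVec_le_mulVec {B : Matrix ι ι ℝ} {δ M : ℝ} (hδ : 0 ≤ δ) (hM : 0 < M)
    (hL : ∀ i j, δ ≤ B i j) (hU : ∀ i j, B i j ≤ M) {v w : ι → ℝ} (hv : 0 ≤ v)
    (hSv : 0 < ∑ j, v j) (hw : 0 ≤ w) :
    (δ / M * ((∑ j, w j) / ∑ j, v j)) • (B *ᵥ v) ≤ B *ᵥ w := fun i => by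
  have hSw : 0 ≤ ∑ j, w j := Finset.sum_nonneg fun j _ => hw j
  calc (δ / M * ((∑ j, w j) / ∑ j, v j)) * (B *ᵥ v) i
      ≤ (δ / M * ((∑ j, w j) / ∑ j, v j)) * (M * ∑ j, v j) :=
        mul_le_mul_of_nonneg_left (mulVec_apply_le_mul_sum hU hv i) (by positivity)
    _ = δ * ∑ j, w j := by field_simp
    _ ≤ (B *ᵥ w) i := mul_sum_le_mulVec_apply hL hw i

/-- Birkhoff's contraction for the oscillation `β - α` of `u / v`, where `α • v ≤ u ≤ β • v`:
a matrix with entries in `[δ, M]` shrinks it by the factor `1 - δ / M`. -/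
theorem exists_smul_mulVec_le_mulVec_le_smul_mulVec [Nonempty ι] {B : Matrix ι ι ℝ} {δ M : ℝ}
    (hδ : 0 ≤ δ) (hM : 0 < M) (hL : ∀ i j, δ ≤ B i j) (hU : ∀ i j, B i j ≤ M)
    {u v : ι → ℝ} (hv : ∀ i, 0 < v i) {α β : ℝ} (hα : α • v ≤ u) (hβ : u ≤ β • v) :
    ∃ α' β', α' • (B *ᵥ v) ≤ B *ᵥ u ∧ B *ᵥ u ≤ β' • (B *ᵥ v) ∧
      β' - α' = (1 - δ / M) * (β - α) := by
  have hSv : 0 < ∑ j, v j := Finset.sum_pos (fun j _ => hv j) Finset.univ_nonempty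
  have hlo := div_smul_mulVec_le_mulVec hδ hM hL hU (fun i => (hv i).le) hSv (sub_nonneg.mpr hα)
  have hhi := div_smul_mulVec_le_mulVec hδ hM hL hU (fun i => (hv i).le) hSv (sub_nonneg.mpr hβ)
  refine ⟨α + δ / M * ((∑ j, (u - α • v) j) / ∑ j, v j),
    β - δ / M * ((∑ j, (β • v - u) j) / ∑ j, v j), fun i => ?_, fun i => ?_, ?_⟩
  · have hloi := hlo i
    simp only [mulVec_sub, mulVec_smul, Pi.smul_apply, Pi.sub_apply, smul_eq_mul] at hloi ⊢
    linarith
  · have hhii := hhi i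
    simp only [mulVec_sub, mulVec_smul, Pi.smul_apply, Pi.sub_apply, smul_eq_mul] at hhii ⊢
    linarith
  · simp only [Pi.sub_apply, Pi.smul_apply, smul_eq_mul, Finset.sum_sub_distrib,
      ← Finset.mul_sum]
    field_simp
    ring

theorem exists_smul_le_le_smul_of_iterate [Nonempty ι] {B : Matrix ι ι ℝ} {δ M : ℝ}
    (hδ : 0 ≤ δ) (hM : 0 < M) (hL : ∀ i j, δ ≤ B i j) (hU : ∀ i j, B i j ≤ M)
    {u v : ℕ → ι → ℝ} (hv : ∀ k i, 0 < v k i) (hBu : ∀ k, B *ᵥ u (k + 1) = u k)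
    (hBv : ∀ k, B *ᵥ v (k + 1) = v k) (k : ℕ) {α β : ℝ} (hα : α • v k ≤ u k)
    (hβ : u k ≤ β • v k) :
    ∃ α' β', α' • v 0 ≤ u 0 ∧ u 0 ≤ β' • v 0 ∧ β' - α' = (1 - δ / M) ^ k * (β - α) := by
  induction k generalizing α β with
  | zero => exact ⟨α, β, hα, hβ, by ring⟩
  | succ k ih =>
    obtain ⟨α₁, β₁, hα₁, hβ₁, hwidth₁⟩ :=
      exists_smul_mulVec_le_mulVec_le_smul_mulVec hδ hM hL hU (hv (k + 1)) hα hβ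
    rw [hBu, hBv] at hα₁ hβ₁
    obtain ⟨α', β', hα', hβ', hwidth⟩ := ih hα₁ hβ₁
    exact ⟨α', β', hα', hβ', by rw [hwidth, hwidth₁]; ring⟩

theorem mulVec_le_div_smul_mulVec {B C : Matrix ι ι ℝ} {δ M : ℝ} (hδ : 0 < δ) (hM : 0 ≤ M)
    (hL : ∀ i j, δ ≤ B i j) (hC : ∀ i j, C i j ≤ M) {w : ι → ℝ} (hw : 0 ≤ w) :
    C *ᵥ w ≤ (M / δ) • (B *ᵥ w) := fun i =>
  calc (C *ᵥ w) i ≤ M * ∑ j, w j := mulVec_apply_le_mul_sum hC hw i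
    _ = M / δ * (δ * ∑ j, w j) := by field_simp
    _ ≤ M / δ * (B *ᵥ w) i :=
      mul_le_mul_of_nonneg_left (mul_sum_le_mulVec_apply hL hw i) (by positivity)

theorem pow_mulVec_add_of_mulVec_succ {A : Matrix ι ι ℝ} [DecidableEq ι] {y : ℕ → ι → ℝ}
    (hAy : ∀ k, A *ᵥ y (k + 1) = y k) (p k : ℕ) : (A ^ p) *ᵥ y (k + p) = y k := by
  induction p with
  | zero => simp
  | succ p ih => rw [pow_succ, ← mulVec_mulVec, ← add_assoc, hAy, ih]

theorem exists_pos_le_entries [Nonempty ι] {B : Matrix ι ι ℝ} (hB : ∀ i j, 0 < B i j) :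
    ∃ δ > 0, ∀ i j, δ ≤ B i j := by
  obtain ⟨p, hp⟩ := Finite.exists_min fun p : ι × ι => B p.1 p.2
  exact ⟨B p.1 p.2, hB p.1 p.2, fun i j => hp (i, j)⟩

theorem exists_eq_smul_of_backward_orbits [Nonempty ι] {B : Matrix ι ι ℝ}
    (hB : ∀ i j, 0 < B i j) {u v : ℕ → ι → ℝ} (hv : ∀ k i, 0 < v k i)
    (hBu : ∀ k, B *ᵥ u (k + 1) = u k) (hBv : ∀ k, B *ᵥ v (k + 1) = v k) {α β : ℝ}
    (hα : ∀ k, α • v k ≤ u k) (hβ : ∀ k, u k ≤ β • v k) : ∃ t : ℝ, u 0 = t • v 0 := by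
  obtain ⟨i₀⟩ := ‹Nonempty ι›
  obtain ⟨δ, hδ, hL⟩ := exists_pos_le_entries hB
  obtain ⟨M, hU⟩ := Finite.exists_le fun p : ι × ι => B p.1 p.2
  have hδM : δ ≤ M := (hL i₀ i₀).trans (hU (i₀, i₀))
  have hM : 0 < M := hδ.trans_le hδM
  have hosc : ∀ k, ∃ α' β' : ℝ, α' • v 0 ≤ u 0 ∧ u 0 ≤ β' • v 0 ∧
      β' - α' ≤ (1 - δ / M) ^ k * (β - α) := fun k => by
    obtain ⟨α', β', hα', hβ', hwidth⟩ := exists_smul_le_le_smul_of_iterate hδ.le hM hL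
      (fun i j => hU (i, j)) hv hBu hBv k (hα k) (hβ k)
    exact ⟨α', β', hα', hβ', hwidth.le⟩
  have hθ : 0 ≤ 1 - δ / M := sub_nonneg.mpr ((div_le_one hM).mpr hδM)
  have hθ' : 1 - δ / M < 1 := sub_lt_self _ (div_pos hδ hM)
  have hlim : Tendsto (fun k => (1 - δ / M) ^ k * (β - α)) atTop (𝓝 0) := by
    simpa using (tendsto_pow_atTop_nhds_zero_of_lt_one hθ hθ').mul_const (β - α)
  exact exists_eq_smul_of_forall_smul_le_le_smul (hv 0) hlim hosc

theorem exists_mulVec_eq_smul_of_pos_backward_orbit [DecidableEq ι] {A : Matrix ι ι ℝ}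
    (hA : ∀ i j, 0 ≤ A i j) {m : ℕ} (hm : ∀ i j, 0 < (A ^ m) i j) {y : ℕ → ι → ℝ}
    (hy : ∀ k i, 0 < y k i) (hAy : ∀ k, A *ᵥ y (k + 1) = y k) :
    ∃ t : ℝ, A *ᵥ y 0 = t • y 0 := by
  rcases isEmpty_or_nonempty ι with _ | _
  · exact ⟨0, Subsingleton.elim _ _⟩
  obtain ⟨i₀⟩ := ‹Nonempty ι›
  set B := A ^ m
  set v : ℕ → ι → ℝ := fun k => y (k * m)
  have hBv : ∀ k, B *ᵥ v (k + 1) = v k := fun k => by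
    simpa only [v, add_mul, one_mul] using pow_mulVec_add_of_mulVec_succ hAy m (k * m)
  have hBu : ∀ k, B *ᵥ (A *ᵥ v (k + 1)) = A *ᵥ v k := fun k => by
    rw [← hBv k, mulVec_mulVec, mulVec_mulVec, ← (Commute.self_pow A m).eq]
  obtain ⟨δ, hδ, hL⟩ := exists_pos_le_entries hm
  obtain ⟨M, hU⟩ := Finite.exists_le fun p : ι × ι => (A * B) p.1 p.2
  have hAB : ∀ i j, 0 ≤ (A * B) i j := fun i j =>
    Finset.sum_nonneg fun l _ => mul_nonneg (hA i l) (hm l j).le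
  have hM : 0 ≤ M := (hAB i₀ i₀).trans (hU (i₀, i₀))
  have hbounds : ∀ k, (0 : ℝ) • v k ≤ A *ᵥ v k ∧ A *ᵥ v k ≤ (M / δ) • v k := fun k => by
    have hv : 0 ≤ v (k + 1) := fun i => (hy _ i).le
    rw [zero_smul, ← hBv k, mulVec_mulVec]
    exact ⟨mulVec_nonneg hAB hv, mulVec_le_div_smul_mulVec hδ hM hL (fun i j => hU (i, j)) hv⟩
  simpa [v] using exists_eq_smul_of_backward_orbits hm (fun k i => hy (k * m) i) hBu hBv
    (fun k => (hbounds k).1) (fun k => (hbounds k).2)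

theorem mem_spectrum_iff_exists_mulVec_eq_smul {K : Type*} [Field K] [DecidableEq ι]
    (A : Matrix ι ι K) (μ : K) : μ ∈ spectrum K A ↔ ∃ v, v ≠ 0 ∧ A *ᵥ v = μ • v := by
  rw [← spectrum_toLin', ← Module.End.hasEigenvalue_iff_mem_spectrum]
  constructor
  · intro h
    obtain ⟨v, hv⟩ := h.exists_hasEigenvector
    rw [Module.End.hasEigenvector_iff, Module.End.mem_eigenspace_iff, toLin'_apply] at hv
    exact ⟨v, hv.2, hv.1⟩
  · rintro ⟨v, hv, hAv⟩
    refine Module.End.hasEigenvalue_of_hasEigenvector (x := v) ?_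
    rw [Module.End.hasEigenvector_iff, Module.End.mem_eigenspace_iff, toLin'_apply]
    exact ⟨hAv, hv⟩

theorem ofReal_mem_spectrum_map_ofReal [DecidableEq ι] {A : Matrix ι ι ℝ} {μ : ℝ} {v : ι → ℝ}
    (hv : v ≠ 0) (hAv : A *ᵥ v = μ • v) :
    (μ : ℂ) ∈ spectrum ℂ (A.map (fun x : ℝ => (x : ℂ))) := by
  rw [mem_spectrum_iff_exists_mulVec_eq_smul]
  refine ⟨fun i => (v i : ℂ), fun h => hv (funext fun i => by simpa using congrFun h i), ?_⟩
  funext i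
  exact (Complex.ofRealHom.map_mulVec A v i).symm.trans (by simp [hAv])

/-- Compare `u` with `b` at a coordinate where `|u i| / b i` is maximal. -/
theorem abs_le_of_mulVec_eq_smul_of_pos {A : Matrix ι ι ℝ} (hA : ∀ i j, 0 ≤ A i j)
    {b : ι → ℝ} (hb : ∀ i, 0 < b i) {t : ℝ} (hAb : A *ᵥ b = t • b)
    {u : ι → ℝ} (hu : u ≠ 0) {μ : ℝ} (hAu : A *ᵥ u = μ • u) : |μ| ≤ t := by
  obtain ⟨i₁, hi₁⟩ := Function.ne_iff.mp hu
  have : Nonempty ι := ⟨i₁⟩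
  obtain ⟨i, hi⟩ := Finite.exists_max fun j => |u j| / b j
  set r := |u i| / b i
  have hle : ∀ j, |u j| ≤ r * b j := fun j => (div_le_iff₀ (hb j)).mp (hi j)
  have hr : 0 < r := (div_pos (abs_pos.mpr hi₁) (hb i₁)).trans_le (hi i₁)
  have hui : 0 < |u i| := by simpa [r, div_pos_iff, hb i] using hr
  refine le_of_mul_le_mul_right ?_ hui
  calc |μ| * |u i| = |(A *ᵥ u) i| := by rw [hAu, Pi.smul_apply, smul_eq_mul, abs_mul]
    _ ≤ ∑ j, A i j * |u j| := by
      refine (Finset.abs_sum_le_sum_abs _ _).trans_eq (Finset.sum_congr rfl fun j _ => ?_)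
      rw [abs_mul, abs_of_nonneg (hA i j)]
    _ ≤ ∑ j, A i j * (r * b j) :=
      Finset.sum_le_sum fun j _ => mul_le_mul_of_nonneg_left (hle j) (hA i j)
    _ = r * (A *ᵥ b) i := by
      simp only [mulVec, dotProduct, Finset.mul_sum]
      exact Finset.sum_congr rfl fun j _ => by ring
    _ = t * (r * b i) := by rw [hAb, Pi.smul_apply, smul_eq_mul]; ring
    _ = t * |u i| := by rw [div_mul_cancel₀ _ (hb i).ne']

theorem eq_of_mulVec_eq_smul_of_pos [DecidableEq ι] {A : Matrix ι ι ℝ}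
    (hA : ∀ i j, 0 ≤ A i j) {b : ι → ℝ} (hb : ∀ i, 0 < b i) {t : ℝ} (hAb : A *ᵥ b = t • b)
    {ρ : ℝ} (hρ : ρ ∈ spectrum ℝ A)
    (hρmax : ∀ μ ∈ spectrum ℂ (A.map (fun x : ℝ => (x : ℂ))), ‖μ‖ ≤ ρ) : t = ρ := by
  obtain ⟨u, hu, hAu⟩ := (mem_spectrum_iff_exists_mulVec_eq_smul A ρ).mp hρ
  obtain ⟨i, -⟩ := Function.ne_iff.mp hu
  have hb0 : b ≠ 0 := Function.ne_iff.mpr ⟨i, (hb i).ne'⟩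
  have htρ : |t| ≤ ρ := by
    simpa using hρmax _ (ofReal_mem_spectrum_map_ofReal hb0 hAb)
  have hρt : |ρ| ≤ t := abs_le_of_mulVec_eq_smul_of_pos hA hb hAb hu hAu
  linarith [le_abs_self t, le_abs_self ρ]

end Matrix

/-- If `A` is primitive nonnegative and invertible, `b > 0` and
`A b ≠ λ₁(A) b`, then some backward iterate `A⁻ᵏ b` leaves the interior of the cone
generated by the columns of `A` (for invertible `A` this interior is
`{x | A⁻¹ x > 0}` entrywise). -/
theorem exists_backward_iterate_leaving_interior_cone
    {n : ℕ} (A : Matrix (Fin n) (Fin n) ℝ) (hA : ∀ i j, 0 ≤ A i j)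
    (hprim : ∃ k : ℕ, 0 < k ∧ ∀ i j, 0 < (A ^ k) i j)
    (hinv : IsUnit A.det)
    (b : Fin n → ℝ) (hb : ∀ i, 0 < b i)
    (ρ : ℝ) (hρ : ρ ∈ spectrum ℝ A)
    (hρmax : ∀ μ ∈ spectrum ℂ (A.map (fun x : ℝ => (x : ℂ))), ‖μ‖ ≤ ρ)
    (hbe : A.mulVec b ≠ ρ • b) :
    ∃ k : ℕ, ¬ ∀ i, 0 < (A⁻¹.mulVec ((A⁻¹ ^ k).mulVec b)) i := by
  by_contra! hpos
  set y : ℕ → Fin n → ℝ := fun k => (A⁻¹ ^ k) *ᵥ b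
  have hAy : ∀ k, A *ᵥ y (k + 1) = y k := fun k => by
    simp only [y]
    rw [pow_succ', ← mulVec_mulVec, mulVec_mulVec _ A, mul_nonsing_inv A hinv, one_mulVec]
  have hy : ∀ k i, 0 < y k i
    | 0 => by simpa [y] using hb
    | k + 1 => by simpa only [y, pow_succ', ← mulVec_mulVec] using hpos k
  obtain ⟨m, -, hm⟩ := hprim
  obtain ⟨t, ht⟩ := exists_mulVec_eq_smul_of_pos_backward_orbit hA hm hy hAy
  have hy0 : y 0 = b := by simp [y]
  rw [hy0] at ht
  exact hbe (eq_of_mulVec_eq_smul_of_pos hA hb ht hρ hρmax ▸ ht)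
end

section
/- Let A be a 2×2 nonnegative matrix and b a nonzero nonnegative vector in ℝ². There exists a nonnegative invertible 2×2 matrix T such that T⁻¹AT is nonnegative and T⁻¹b = α·e₁ for some α > 0 if and only if it is not the case that λ₂(A) < 0 and Ab = λ₁(A)b. -/
open Matrix Polynomial

set_option maxHeartbeats 1000000

private lemma ch_exists_helper (A : Matrix (Fin 2) (Fin 2) ℝ) (b : Fin 2 → ℝ)
    (T M : Matrix (Fin 2) (Fin 2) ℝ)
    (hT : ∀ i j, 0 ≤ T i j) (hdet : T.det ≠ 0) (hM : ∀ i j, 0 ≤ M i j)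
    (hAT : A * T = T * M)
    (hbT : T.mulVec ((1:ℝ) • (Pi.single 0 1 : Fin 2 → ℝ)) = b) :
    ∃ T : Matrix (Fin 2) (Fin 2) ℝ, (∀ i j, 0 ≤ T i j) ∧ T.det ≠ 0 ∧
        (∀ i j, 0 ≤ (T⁻¹ * A * T) i j) ∧
        ∃ α : ℝ, 0 < α ∧ T⁻¹.mulVec b = α • (Pi.single 0 1 : Fin 2 → ℝ) := by
  have hu : IsUnit T.det := isUnit_iff_ne_zero.mpr hdet
  refine ⟨T, hT, hdet, ?_, 1, one_pos, ?_⟩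
  · have h : T⁻¹ * A * T = M := by
      rw [Matrix.mul_assoc, hAT, ← Matrix.mul_assoc, Matrix.nonsing_inv_mul T hu,
        Matrix.one_mul]
    rw [h]; exact hM
  · rw [← hbT, Matrix.mulVec_mulVec, Matrix.nonsing_inv_mul T hu, Matrix.one_mulVec]

/-- A second-order discrete-time positive system `(A, b)` admits a positive
controller-Hessenberg form (a nonnegative invertible `T` with `T⁻¹ A T ≥ 0` and
`T⁻¹ b` a positive multiple of `e₁`) iff it is not the case that `λ₂(A) < 0` and
`A b = λ₁(A) b`. Here `λ₁, λ₂` are the eigenvalues of `A` ordered by descending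
absolute value (ties broken by decreasing real part). -/
theorem second_order_positive_controller_hessenberg_iff
    (A : Matrix (Fin 2) (Fin 2) ℝ) (hA : ∀ i j, 0 ≤ A i j)
    (b : Fin 2 → ℝ) (hb : ∀ i, 0 ≤ b i) (hb0 : b ≠ 0)
    (lam1 lam2 : ℝ)
    (hchar : A.charpoly = (X - C lam1) * (X - C lam2))
    (hord : |lam2| ≤ |lam1|) (htie : |lam2| = |lam1| → lam2 ≤ lam1) :
    (∃ T : Matrix (Fin 2) (Fin 2) ℝ, (∀ i j, 0 ≤ T i j) ∧ T.det ≠ 0 ∧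
        (∀ i j, 0 ≤ (T⁻¹ * A * T) i j) ∧
        ∃ α : ℝ, 0 < α ∧ T⁻¹.mulVec b = α • (Pi.single 0 1 : Fin 2 → ℝ)) ↔
      ¬ (lam2 < 0 ∧ A.mulVec b = lam1 • b) := by
  -- extract trace and determinant relations from the characteristic polynomial
  have htr : A 0 0 + A 1 1 = lam1 + lam2 ∧ A 0 0 * A 1 1 - A 0 1 * A 1 0 = lam1 * lam2 := by
    have h1 : A.trace = -(A.charpoly.coeff 1) := by
      simpa using Matrix.trace_eq_neg_charpoly_coeff A
    have h0 : A.det = A.charpoly.coeff 0 := by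
      simpa using Matrix.det_eq_sign_charpoly_coeff A
    rw [hchar] at h1 h0
    have expand : (X - C lam1) * (X - C lam2)
        = X^2 - C (lam1 + lam2) * X + C (lam1 * lam2) := by
      ring_nf; simp [C_add, C_mul]; ring
    rw [expand] at h1 h0
    have e1 : (X^2 - C (lam1 + lam2) * X + C (lam1 * lam2)).coeff 1 = -(lam1 + lam2) := by
      simp [coeff_X, coeff_C]
    have e0 : (X^2 - C (lam1 + lam2) * X + C (lam1 * lam2)).coeff 0 = lam1 * lam2 := by
      simp
    rw [Matrix.trace_fin_two] at h1
    rw [Matrix.det_fin_two] at h0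
    rw [e1] at h1; rw [e0] at h0
    constructor <;> linarith
  obtain ⟨hTr, hDet⟩ := htr
  set a := A 0 0 with ha
  set c := A 0 1 with hc
  set d := A 1 0 with hd
  set e := A 1 1 with he
  set p := b 0 with hpdef
  set q := b 1 with hqdef
  clear_value a c d e p q
  have hp : 0 ≤ p := by rw [hpdef]; exact hb 0
  have hq : 0 ≤ q := by rw [hqdef]; exact hb 1
  have ha0 : 0 ≤ a := by rw [ha]; exact hA 0 0
  have hc0 : 0 ≤ c := by rw [hc]; exact hA 0 1
  have hd0 : 0 ≤ d := by rw [hd]; exact hA 1 0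
  have he0 : 0 ≤ e := by rw [he]; exact hA 1 1
  -- lam1 ≥ 0
  have hl1 : 0 ≤ lam1 := by
    by_contra hneg
    push_neg at hneg
    have h1 : |lam1| = -lam1 := abs_of_neg hneg
    have h2 : lam2 ≤ -lam1 := le_trans (le_abs_self lam2) (h1 ▸ hord)
    have h3 : 0 ≤ lam1 + lam2 := by linarith
    have h4 : lam2 = -lam1 := by linarith
    have h5 : |lam2| = |lam1| := by rw [h4, abs_neg]
    have := htie h5
    linarith
  have hl21 : lam2 ≤ lam1 := le_trans (le_abs_self lam2) (le_trans hord (le_of_eq (abs_of_nonneg hl1)))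
  -- lam2 ≤ a and lam2 ≤ e
  have hfa : (a - lam1) * (a - lam2) = -(c * d) := by linear_combination a * hTr - hDet
  have hfe : (e - lam1) * (e - lam2) = -(c * d) := by linear_combination e * hTr - hDet
  have hcd : 0 ≤ c * d := mul_nonneg hc0 hd0
  have hl2a : lam2 ≤ a := by nlinarith [hfa, hcd, hl21]
  have hl2e : lam2 ≤ e := by nlinarith [hfe, hcd, hl21]
  constructor
  · -- forward direction
    rintro ⟨T, hT, hdet, hM, α, hα, hvb⟩ ⟨hl2, heig⟩
    have hu : IsUnit T.det := isUnit_iff_ne_zero.mpr hdet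
    set M := T⁻¹ * A * T with hMdef
    have key : M.mulVec (α • (Pi.single 0 1 : Fin 2 → ℝ))
        = lam1 • (α • (Pi.single 0 1 : Fin 2 → ℝ)) := by
      rw [← hvb, Matrix.mulVec_mulVec, hMdef, Matrix.mul_assoc, Matrix.mul_nonsing_inv T hu,
        Matrix.mul_one, ← Matrix.mulVec_mulVec, heig, Matrix.mulVec_smul, hvb]
    have h00 : M 0 0 = lam1 := by
      have h := congrFun key 0
      simp [Matrix.mulVec, dotProduct, Fin.sum_univ_two, Pi.single_apply] at h
      rcases h with h | h
      · exact h
      · exact absurd h (ne_of_gt hα)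
    have htrM : M 0 0 + M 1 1 = a + e := by
      have : M.trace = A.trace := by
        rw [hMdef, Matrix.trace_mul_comm, ← Matrix.mul_assoc, Matrix.mul_nonsing_inv T hu,
          Matrix.one_mul]
      simpa [Matrix.trace_fin_two, ha, he] using this
    have h11 : M 1 1 = lam2 := by linarith
    have := hM 1 1
    linarith
  · -- backward direction
    intro hnot
    by_cases hq0 : q = 0
    · -- b = (p, 0), p > 0 : T = p • I works
      have hp0 : p ≠ 0 := by
        intro hp0
        apply hb0
        funext i
        fin_cases i
        · simpa [← hpdef] using hp0
        · simpa [← hqdef] using hq0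
      have hppos : 0 < p := lt_of_le_of_ne hp (Ne.symm hp0)
      apply ch_exists_helper A b !![p, 0; 0, p] !![a, c; d, e]
      · intro i j; fin_cases i <;> fin_cases j <;> simp <;> positivity
      · rw [Matrix.det_fin_two_of]
        intro h
        exact hp0 (mul_self_eq_zero.mp (by linarith))
      · intro i j; fin_cases i <;> fin_cases j <;> simpa using by assumption
      · ext i j
        fin_cases i <;> fin_cases j <;>
          simp [Matrix.mul_apply, Fin.sum_univ_two, ← ha, ← hc, ← hd, ← he] <;> ring
      · funext i
        fin_cases i <;>
          simp [Matrix.mulVec, dotProduct, Fin.sum_univ_two, ← hpdef, ← hqdef, hq0]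
    · have hqpos : 0 < q := lt_of_le_of_ne hq (Ne.symm hq0)
      by_cases hp0 : p = 0
      · -- b = (0, q), q > 0 : T = antidiag(q, q) works
        apply ch_exists_helper A b !![0, q; q, 0] !![e, d; c, a]
        · intro i j; fin_cases i <;> fin_cases j <;> simp <;> positivity
        · rw [Matrix.det_fin_two_of]
          intro h
          exact hq0 (mul_self_eq_zero.mp (by linarith))
        · intro i j; fin_cases i <;> fin_cases j <;> simpa using by assumption
        · ext i j
          fin_cases i <;> fin_cases j <;>
            simp [Matrix.mul_apply, Fin.sum_univ_two, ← ha, ← hc, ← hd, ← he] <;> ring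
        · funext i
          fin_cases i <;>
            simp [Matrix.mulVec, dotProduct, Fin.sum_univ_two, ← hpdef, ← hqdef, hp0]
      · have hppos : 0 < p := lt_of_le_of_ne hp (Ne.symm hp0)
        by_cases hD : d*p^2 + e*p*q - a*p*q - c*q^2 = 0
        · -- b is an eigenvector : T = [b, q·e₀]
          obtain ⟨μ, hμ⟩ : ∃ μ : ℝ, q * μ = d*p + e*q :=
            ⟨(d*p + e*q)/q, by field_simp⟩
          have h1 : p * μ = a*p + c*q := by
            have h2 : q * (p * μ) = q * (a*p + c*q) := by
              linear_combination p*hμ + hD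
            exact mul_left_cancel₀ hq0 h2
          have hμ0 : 0 ≤ μ := by
            by_contra hcon
            push_neg at hcon
            nlinarith [hμ, mul_nonneg hd0 hp, mul_nonneg he0 hq,
              mul_pos hqpos (neg_pos.mpr hcon)]
          have heigb : A.mulVec b = μ • b := by
            funext i
            fin_cases i <;>
              simp [Matrix.mulVec, dotProduct, Fin.sum_univ_two,
                ← ha, ← hc, ← hd, ← he, ← hpdef, ← hqdef] <;> linarith [h1, hμ]
          have hroot : p * q * ((μ - lam1) * (μ - lam2)) = 0 := by
            linear_combination (q*μ - e*q) * h1 + c*q*hμ + p*q*μ*hTr - p*q*hDet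
          have hμ12 : μ = lam1 ∨ μ = lam2 := by
            have hpq : p * q ≠ 0 := by positivity
            rcases mul_eq_zero.mp ((mul_eq_zero.mp hroot).resolve_left hpq) with h | h
            · left; linarith
            · right; linarith
          have hother : 0 ≤ a + e - μ := by
            rcases hμ12 with h | h
            · have hl2 : ¬ lam2 < 0 := by
                intro hl2
                exact hnot ⟨hl2, by rw [heigb, h]⟩
              push_neg at hl2
              linarith
            · linarith
          apply ch_exists_helper A b !![p, q; q, 0] !![μ, d; 0, a + e - μ]
          · intro i j; fin_cases i <;> fin_cases j <;> simp <;> positivity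
          · rw [Matrix.det_fin_two_of]
            intro h
            exact hq0 (mul_self_eq_zero.mp (by linarith))
          · intro i j
            fin_cases i <;> fin_cases j <;> simp
            · exact hμ0
            · exact hd0
            · linarith [hother]
          · ext i j
            fin_cases i <;> fin_cases j <;>
              simp [Matrix.mul_apply, Fin.sum_univ_two, ← ha, ← hc, ← hd, ← he]
            · linarith [h1]
            · linarith [hμ]
            · linarith [hμ]
            · ring
          · funext i
            fin_cases i <;>
              simp [Matrix.mulVec, dotProduct, Fin.sum_univ_two, ← hpdef, ← hqdef]
        · -- b, Ab independent
          by_cases hl2 : 0 ≤ lam2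
          · -- T = [b, (A - lam2) b]
            apply ch_exists_helper A b
              !![p, a*p + c*q - lam2*p; q, d*p + e*q - lam2*q] !![lam2, 0; 1, lam1]
            · intro i j
              fin_cases i <;> fin_cases j <;> simp
              · exact hp
              · nlinarith [mul_nonneg (sub_nonneg.mpr hl2a) hp, mul_nonneg hc0 hq]
              · exact hq
              · nlinarith [mul_nonneg (sub_nonneg.mpr hl2e) hq, mul_nonneg hd0 hp]
            · rw [Matrix.det_fin_two_of]
              intro h; apply hD; nlinarith [h]
            · intro i j
              fin_cases i <;> fin_cases j <;> simp
              · exact hl2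
              · exact hl1
            · ext i j
              fin_cases i <;> fin_cases j <;>
                simp [Matrix.mul_apply, Fin.sum_univ_two, ← ha, ← hc, ← hd, ← he] <;>
                first
                  | ring1
                  | linear_combination (a*p + c*q) * hTr - p*hDet
                  | linear_combination (d*p + e*q) * hTr - q*hDet
            · funext i
              fin_cases i <;>
                simp [Matrix.mulVec, dotProduct, Fin.sum_univ_two, ← hpdef, ← hqdef]
          · -- lam2 < 0 : companion form T = [b, Ab]
            push_neg at hl2
            apply ch_exists_helper A b
              !![p, a*p + c*q; q, d*p + e*q] !![0, -(lam1*lam2); 1, lam1 + lam2]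
            · intro i j; fin_cases i <;> fin_cases j <;> simp <;> positivity
            · rw [Matrix.det_fin_two_of]
              intro h; apply hD; nlinarith [h]
            · intro i j
              fin_cases i <;> fin_cases j <;> simp
              · nlinarith
              · linarith
            · ext i j
              fin_cases i <;> fin_cases j <;>
                simp [Matrix.mul_apply, Fin.sum_univ_two, ← ha, ← hc, ← hd, ← he] <;>
                first
                  | ring1
                  | linear_combination (a*p + c*q) * hTr - p*hDet
                  | linear_combination (d*p + e*q) * hTr - q*hDet
            · funext i
              fin_cases i <;>
                simp [Matrix.mulVec, dotProduct, Fin.sum_univ_two, ← hpdef, ← hqdef]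
end

section
/- Every 3×3 Metzler matrix A is similar, via a nonnegative invertible matrix T, to a Metzler upper Hessenberg matrix T⁻¹AT. -/
open Matrix

private lemma conj_of_mul_eq {T A B : Matrix (Fin 3) (Fin 3) ℝ} (hT : T.det ≠ 0)
    (h : A * T = T * B) : T⁻¹ * A * T = B := by
  calc T⁻¹ * A * T = T⁻¹ * (A * T) := by rw [Matrix.mul_assoc]
    _ = T⁻¹ * (T * B) := by rw [h]
    _ = (T⁻¹ * T) * B := by rw [Matrix.mul_assoc]
    _ = B := by rw [Matrix.nonsing_inv_mul T (isUnit_iff_ne_zero.mpr hT), Matrix.one_mul]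

/-- Every 3×3 Metzler matrix is similar, via a nonnegative invertible
matrix, to a Metzler upper Hessenberg matrix. -/
theorem metzler_3x3_similar_metzler_hessenberg
    (A : Matrix (Fin 3) (Fin 3) ℝ) (hA : ∀ i j, i ≠ j → 0 ≤ A i j) :
    ∃ T : Matrix (Fin 3) (Fin 3) ℝ, (∀ i j, 0 ≤ T i j) ∧ T.det ≠ 0 ∧
      (∀ i j, i ≠ j → 0 ≤ (T⁻¹ * A * T) i j) ∧
      (∀ i j : Fin 3, (j : ℕ) + 1 < (i : ℕ) → (T⁻¹ * A * T) i j = 0) := by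
  have h01 := hA 0 1 (by decide)
  have h02 := hA 0 2 (by decide)
  have h10 := hA 1 0 (by decide)
  have h12 := hA 1 2 (by decide)
  have h21 := hA 2 1 (by decide)
  have h20 := hA 2 0 (by decide)
  by_cases hz : A 2 0 = 0
  · refine ⟨1, ?_, ?_, ?_, ?_⟩
    · intro i j
      by_cases h : i = j <;> simp [Matrix.one_apply, h]
    · simp
    · intro i j hij
      simpa using hA i j hij
    · intro i j hij
      have hi : i = 2 := by omega
      have hj : j = 0 := by omega
      subst hi; subst hj
      simpa using hz
  · have hpos : 0 < A 2 0 := lt_of_le_of_ne h20 (Ne.symm hz)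
    by_cases hc : (A 1 0 * A 2 1 + A 2 0 * A 2 2) * A 1 0 ≤
        (A 1 0 * A 1 1 + A 2 0 * A 1 2) * A 2 0
    · -- T = [e0, (0,A10,A20), e1]
      have hdet : (!![1,0,0; 0,A 1 0,1; 0,A 2 0,0] : Matrix (Fin 3) (Fin 3) ℝ).det ≠ 0 := by
        simp [Matrix.det_fin_three]
        exact hz
      have hB : (!![1,0,0; 0,A 1 0,1; 0,A 2 0,0] : Matrix (Fin 3) (Fin 3) ℝ)⁻¹ * A *
          !![1,0,0; 0,A 1 0,1; 0,A 2 0,0] =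
          !![A 0 0, A 1 0 * A 0 1 + A 2 0 * A 0 2, A 0 1;
             1, (A 1 0 * A 2 1 + A 2 0 * A 2 2) / A 2 0, A 2 1 / A 2 0;
             0, (A 1 0 * A 1 1 + A 2 0 * A 1 2) -
                 (A 1 0 * A 2 1 + A 2 0 * A 2 2) * A 1 0 / A 2 0,
               A 1 1 - A 2 1 * A 1 0 / A 2 0] := by
        apply conj_of_mul_eq hdet
        ext i j
        fin_cases i <;> fin_cases j <;>
          · simp [Matrix.mul_apply, Fin.sum_univ_three, Matrix.vecHead, Matrix.vecTail]
            try field_simp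
            try ring
      refine ⟨_, ?_, hdet, ?_, ?_⟩
      · intro i j
        fin_cases i <;> fin_cases j <;>
          simp [Matrix.vecHead, Matrix.vecTail, h10, h20]
      · rw [hB]
        intro i j hij
        fin_cases i <;> fin_cases j <;>
          simp [Matrix.vecHead, Matrix.vecTail] <;>
          first
          | exact absurd rfl hij
          | positivity
          | · rw [div_le_iff₀ hpos]
              linarith
      · rw [hB]
        intro i j hij
        have hi : i = 2 := by omega
        have hj : j = 0 := by omega
        subst hi; subst hj
        simp [Matrix.vecHead, Matrix.vecTail]
    · push_neg at hc
      have h10pos : 0 < A 1 0 := by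
        rcases lt_or_eq_of_le h10 with h | h
        · exact h
        · exfalso
          rw [← h] at hc
          linarith [mul_nonneg (mul_nonneg h20 h12) h20]
      have hdet : (!![1,0,0; 0,A 1 0,0; 0,A 2 0,1] : Matrix (Fin 3) (Fin 3) ℝ).det ≠ 0 := by
        simp [Matrix.det_fin_three]
        exact ne_of_gt h10pos
      have hB : (!![1,0,0; 0,A 1 0,0; 0,A 2 0,1] : Matrix (Fin 3) (Fin 3) ℝ)⁻¹ * A *
          !![1,0,0; 0,A 1 0,0; 0,A 2 0,1] =
          !![A 0 0, A 1 0 * A 0 1 + A 2 0 * A 0 2, A 0 2;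
             1, (A 1 0 * A 1 1 + A 2 0 * A 1 2) / A 1 0, A 1 2 / A 1 0;
             0, (A 1 0 * A 2 1 + A 2 0 * A 2 2) -
                 (A 1 0 * A 1 1 + A 2 0 * A 1 2) * A 2 0 / A 1 0,
               A 2 2 - A 1 2 * A 2 0 / A 1 0] := by
        apply conj_of_mul_eq hdet
        ext i j
        fin_cases i <;> fin_cases j <;>
          · simp [Matrix.mul_apply, Fin.sum_univ_three, Matrix.vecHead, Matrix.vecTail]
            try field_simp
            try ring
      refine ⟨_, ?_, hdet, ?_, ?_⟩
      · intro i j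
        fin_cases i <;> fin_cases j <;>
          simp [Matrix.vecHead, Matrix.vecTail, h10, h20]
      · rw [hB]
        intro i j hij
        fin_cases i <;> fin_cases j <;>
          simp [Matrix.vecHead, Matrix.vecTail] <;>
          first
          | exact absurd rfl hij
          | positivity
          | · rw [div_le_iff₀ h10pos]
              linarith
      · rw [hB]
        intro i j hij
        have hi : i = 2 := by omega
        have hj : j = 0 := by omega
        subst hi; subst hj
        simp [Matrix.vecHead, Matrix.vecTail]
end

section
/- Let A be a reducible 3×3 nonnegative matrix with all eigenvalues having positive real part, and assume λ₃(A) ∈ ℝ. Then A − λ₃(A)I is nonnegative and has rank at most 2. -/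
/-!
After a permutation of indices, `A` is block upper triangular with a `1 × 1` and a `2 × 2`
diagonal block, so `det (z • 1 - A) = (z - e) * ((z - a) * (z - d) - b * c)` with `b * c ≥ 0`.
Hence every diagonal entry of `A` dominates a real eigenvalue: `e` is one, and the smaller root
of the quadratic factor lies below `min a d`. Real eigenvalues with positive real part are
positive, so `μ ≤ |μ|` is below each of them, and `A - μ • 1` has nonnegative entries. It is
singular because `μ` is an eigenvalue.
-/

theorem exists_le_min_sub_mul_sub_eq (a d : ℝ) {t : ℝ} (ht : 0 ≤ t) :
    ∃ r ≤ min a d, (r - a) * (r - d) = t := by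
  set s := √((a - d) ^ 2 + 4 * t)
  have hs : s ^ 2 = (a - d) ^ 2 + 4 * t := Real.sq_sqrt (by positivity)
  have hs_ge : |a - d| ≤ s := Real.abs_le_sqrt (by linarith)
  refine ⟨(a + d - s) / 2, le_min ?_ ?_, by linear_combination hs / 4⟩ <;>
    linarith [abs_le.mp hs_ge]

namespace Matrix

variable {n : Type*} [DecidableEq n]

section Order

variable {R : Type*} [Ring R] [PartialOrder R] [IsOrderedAddMonoid R]

theorem sub_smul_one_nonneg {A : Matrix n n R} {μ : R} (hA : ∀ i j, 0 ≤ A i j)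
    (hdiag : ∀ i, μ ≤ A i i) (i j : n) : 0 ≤ (A - μ • 1) i j := by
  obtain rfl | hij := eq_or_ne i j
  · simpa using hdiag i
  · simpa [one_apply_ne hij] using hA i j

end Order

variable [Fintype n] {K : Type*} [Field K]

theorem rank_lt_card_of_not_isUnit {A : Matrix n n K} (hA : ¬IsUnit A) :
    A.rank < Fintype.card n := by
  refine (rank_le_card_width A).lt_of_ne fun hrank => hA ?_
  rw [← mulVec_surjective_iff_isUnit, ← Matrix.coe_mulVecLin, ← LinearMap.range_eq_top]
  exact Submodule.eq_top_of_finrank_eq (by simpa [rank] using hrank)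

theorem rank_sub_smul_one_lt_card {A : Matrix n n K} {μ : K} (hμ : μ ∈ spectrum K A) :
    (A - μ • 1).rank < Fintype.card n := by
  refine rank_lt_card_of_not_isUnit fun hunit => spectrum.mem_iff.mp hμ ?_
  rw [Algebra.algebraMap_eq_smul_one, ← neg_sub]
  exact hunit.neg

theorem mem_spectrum_iff_det_smul_one_sub {A : Matrix n n K} {z : K} :
    z ∈ spectrum K A ↔ (z • 1 - A).det = 0 := by
  rw [spectrum.mem_iff, isUnit_iff_isUnit_det, isUnit_iff_ne_zero, not_ne_iff,
    Algebra.algebraMap_eq_smul_one]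

theorem map_mem_spectrum_map {L : Type*} [Field L] (f : K →+* L) {A : Matrix n n K} {r : K}
    (hr : r ∈ spectrum K A) : f r ∈ spectrum L (A.map f) := by
  rw [mem_spectrum_iff_isRoot_charpoly, charpoly_map] at *
  exact hr.map

theorem spectrum_submatrix_equiv {m : Type*} [Fintype m] [DecidableEq m] (A : Matrix n n K)
    (e : m ≃ n) : spectrum K (A.submatrix e e) = spectrum K A := by
  ext z
  rw [mem_spectrum_iff_isRoot_charpoly, mem_spectrum_iff_isRoot_charpoly,
    ← charpoly_reindex e.symm A]
  rfl

theorem det_fin_three_of_col_zero {R : Type*} [CommRing R] {B : Matrix (Fin 3) (Fin 3) R}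
    (h₁₀ : B 1 0 = 0) (h₂₀ : B 2 0 = 0) :
    B.det = B 0 0 * (B 1 1 * B 2 2 - B 1 2 * B 2 1) := by
  rw [det_fin_three, h₁₀, h₂₀]
  ring

theorem det_fin_three_of_row_zero {R : Type*} [CommRing R] {B : Matrix (Fin 3) (Fin 3) R}
    (h₂₀ : B 2 0 = 0) (h₂₁ : B 2 1 = 0) :
    B.det = (B 0 0 * B 1 1 - B 0 1 * B 1 0) * B 2 2 := by
  rw [det_fin_three, h₂₀, h₂₁]
  ring

theorem mem_spectrum_of_det_smul_one_sub_eq {A : Matrix n n ℝ} {e a d t : ℝ} (ht : 0 ≤ t)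
    (hdet : ∀ z, (z • 1 - A).det = (z - e) * ((z - a) * (z - d) - t)) :
    e ∈ spectrum ℝ A ∧ ∃ r ∈ spectrum ℝ A, r ≤ min a d := by
  obtain ⟨r, hr_le, hr⟩ := exists_le_min_sub_mul_sub_eq a d ht
  refine ⟨?_, r, ?_, hr_le⟩ <;> rw [mem_spectrum_iff_det_smul_one_sub, hdet]
  · ring
  · rw [hr, sub_self, mul_zero]

theorem exists_mem_spectrum_le_diag_of_col_zero {B : Matrix (Fin 3) (Fin 3) ℝ}
    (hB : ∀ i j, 0 ≤ B i j) (h₁₀ : B 1 0 = 0) (h₂₀ : B 2 0 = 0) (i : Fin 3) :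
    ∃ ν ∈ spectrum ℝ B, ν ≤ B i i := by
  have hdet (z : ℝ) : (z • 1 - B).det
      = (z - B 0 0) * ((z - B 1 1) * (z - B 2 2) - B 1 2 * B 2 1) := by
    rw [det_fin_three_of_col_zero (by simp [h₁₀]) (by simp [h₂₀])]
    simp
  obtain ⟨he, r, hr, hr_le⟩ :=
    mem_spectrum_of_det_smul_one_sub_eq (mul_nonneg (hB 1 2) (hB 2 1)) hdet
  fin_cases i
  · exact ⟨_, he, le_rfl⟩
  · exact ⟨r, hr, hr_le.trans (min_le_left _ _)⟩
  · exact ⟨r, hr, hr_le.trans (min_le_right _ _)⟩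

theorem exists_mem_spectrum_le_diag_of_row_zero {B : Matrix (Fin 3) (Fin 3) ℝ}
    (hB : ∀ i j, 0 ≤ B i j) (h₂₀ : B 2 0 = 0) (h₂₁ : B 2 1 = 0) (i : Fin 3) :
    ∃ ν ∈ spectrum ℝ B, ν ≤ B i i := by
  have hdet (z : ℝ) : (z • 1 - B).det
      = (z - B 2 2) * ((z - B 0 0) * (z - B 1 1) - B 0 1 * B 1 0) := by
    rw [det_fin_three_of_row_zero (by simp [h₂₀]) (by simp [h₂₁])]
    simp [mul_comm]
  obtain ⟨he, r, hr, hr_le⟩ :=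
    mem_spectrum_of_det_smul_one_sub_eq (mul_nonneg (hB 0 1) (hB 1 0)) hdet
  fin_cases i
  · exact ⟨r, hr, hr_le.trans (min_le_left _ _)⟩
  · exact ⟨r, hr, hr_le.trans (min_le_right _ _)⟩
  · exact ⟨_, he, le_rfl⟩

theorem exists_mem_spectrum_le_diag_of_reducible {A : Matrix (Fin 3) (Fin 3) ℝ}
    (hA : ∀ i j, 0 ≤ A i j)
    (hred : ∃ (σ : Equiv.Perm (Fin 3)) (k : ℕ), 0 < k ∧ k < 3 ∧
      ∀ i j : Fin 3, k ≤ (i : ℕ) → (j : ℕ) < k → A (σ i) (σ j) = 0)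
    (i : Fin 3) : ∃ ν ∈ spectrum ℝ A, ν ≤ A i i := by
  obtain ⟨σ, k, hk₀, hk₃, hzero⟩ := hred
  have hB : ∀ i j, 0 ≤ A.submatrix σ σ i j := fun _ _ => hA _ _
  have key : ∃ ν ∈ spectrum ℝ (A.submatrix σ σ),
      ν ≤ A.submatrix σ σ (σ.symm i) (σ.symm i) := by
    obtain rfl | rfl : k = 1 ∨ k = 2 := by omega
    · exact exists_mem_spectrum_le_diag_of_col_zero hB
        (hzero 1 0 (by decide) (by decide)) (hzero 2 0 (by decide) (by decide)) _
    · exact exists_mem_spectrum_le_diag_of_row_zero hB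
        (hzero 2 0 (by decide) (by decide)) (hzero 2 1 (by decide) (by decide)) _
  simpa [spectrum_submatrix_equiv] using key

end Matrix

open Matrix

/-- If `A` is a reducible 3×3 nonnegative matrix all of whose eigenvalues
have positive real part, and its eigenvalue `μ` of smallest absolute value is real, then
`A - μ I` is nonnegative of rank at most 2. -/
theorem reducible_3x3_sub_smallest_eigenvalue_nonneg_rank_le_two
    (A : Matrix (Fin 3) (Fin 3) ℝ) (hA : ∀ i j, 0 ≤ A i j)
    (hred : ∃ (σ : Equiv.Perm (Fin 3)) (k : ℕ), 0 < k ∧ k < 3 ∧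
      ∀ i j : Fin 3, k ≤ (i : ℕ) → (j : ℕ) < k → A (σ i) (σ j) = 0)
    (hspec : ∀ ν ∈ spectrum ℂ (A.map (fun x : ℝ => (x : ℂ))), 0 < ν.re)
    (μ : ℝ) (hμ : μ ∈ spectrum ℝ A)
    (hmin : ∀ ν ∈ spectrum ℂ (A.map (fun x : ℝ => (x : ℂ))), |μ| ≤ ‖ν‖) :
    (∀ i j, 0 ≤ (A - μ • (1 : Matrix (Fin 3) (Fin 3) ℝ)) i j) ∧
    (A - μ • (1 : Matrix (Fin 3) (Fin 3) ℝ)).rank ≤ 2 := by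
  have hdiag (i : Fin 3) : μ ≤ A i i := by
    obtain ⟨ν, hν, hν_le⟩ := exists_mem_spectrum_le_diag_of_reducible hA hred i
    have hνC : (ν : ℂ) ∈ spectrum ℂ (A.map (fun x : ℝ => (x : ℂ))) :=
      map_mem_spectrum_map Complex.ofRealHom hν
    have hν_pos : 0 < ν := by simpa using hspec _ hνC
    calc μ ≤ |μ| := le_abs_self μ
      _ ≤ ‖(ν : ℂ)‖ := hmin _ hνC
      _ = ν := by rw [Complex.norm_real, Real.norm_of_nonneg hν_pos.le]
      _ ≤ A i i := hν_le
  exact ⟨sub_smul_one_nonneg hA hdiag,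
    Nat.le_of_lt_succ (rank_sub_smul_one_lt_card hμ)⟩
end

section
/- Let A be the 3×3 matrix with rows (0,0,14), (0,6,0), (15,4,6) and b = (1,1,0)ᵀ. Then A is similar to a nonnegative upper Hessenberg matrix, but there exists no invertible nonnegative 3×3 matrix T whose first column is b such that T⁻¹AT is nonnegative. -/
/-!
If `T ≥ 0` is invertible with first column `b` and `M = T⁻¹AT ≥ 0`, then `Aᵏ T = T Mᵏ` puts
every `Aᵏ b` in the cone spanned by the columns `b, x, y` of `T`. If `x₀ = y₀ = 0`, this cone
forces `(A²b)₀ ≤ (A²b)₁`, which fails; so, say, `y₀ > 0`. Since `(Ab)₀ = 0 < b₀`, the vector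
`Ab` is then a multiple of `x`, and the cone lies in the one spanned by `b, Ab, y`. Writing `A²b`
and `A³b` in the latter bounds `y₀ / y₂` from below by `230 / 138` and from above by
`1932 / 4278`.
-/

open Matrix

namespace PointedCone

section OrderedSemiring

variable {R : Type*} [Semiring R] [PartialOrder R] [IsOrderedRing R]

theorem mem_hull_triple {E : Type*} [AddCommMonoid E] [Module R E] {b x y v : E} :
    v ∈ hull R {b, x, y} ↔
      ∃ α β γ : R, 0 ≤ α ∧ 0 ≤ β ∧ 0 ≤ γ ∧ α • b + β • x + γ • y = v := by
  simp only [Submodule.mem_span_insert, Submodule.mem_span_singleton]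
  constructor
  · rintro ⟨⟨α, hα⟩, _, ⟨⟨β, hβ⟩, _, ⟨⟨γ, hγ⟩, rfl⟩, rfl⟩, rfl⟩
    exact ⟨α, β, γ, hα, hβ, hγ, by simp only [Nonneg.mk_smul, add_assoc]⟩
  · rintro ⟨α, β, γ, hα, hβ, hγ, rfl⟩
    exact ⟨⟨α, hα⟩, _, ⟨⟨β, hβ⟩, _, ⟨⟨γ, hγ⟩, rfl⟩, rfl⟩, by simp only [Nonneg.mk_smul, add_assoc]⟩

theorem apply_le_apply_of_mem_hull {ι : Type*} {b x y v : ι → R} {i j : ι}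
    (hv : v ∈ hull R {b, x, y}) (hb : b i ≤ b j) (hxi : x i = 0) (hyi : y i = 0)
    (hxj : 0 ≤ x j) (hyj : 0 ≤ y j) : v i ≤ v j := by
  obtain ⟨α, β, γ, hα, hβ, hγ, rfl⟩ := mem_hull_triple.1 hv
  simp only [Pi.add_apply, Pi.smul_apply, smul_eq_mul, hxi, hyi, mul_zero, add_zero]
  calc α * b i ≤ α * b j := mul_le_mul_of_nonneg_left hb hα
    _ ≤ α * b j + (β * x j + γ * y j) :=
      le_add_of_nonneg_right (add_nonneg (mul_nonneg hβ hxj) (mul_nonneg hγ hyj))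
    _ = α * b j + β * x j + γ * y j := (add_assoc _ _ _).symm

end OrderedSemiring

theorem hull_le_hull_of_apply_eq_zero {K ι : Type*} [Field K] [LinearOrder K]
    [IsStrictOrderedRing K] {b x y v : ι → K} {i : ι}
    (hv : v ∈ hull K {b, x, y}) (hv0 : v ≠ 0) (hvi : v i = 0) (hbi : 0 < b i) (hxi : 0 ≤ x i)
    (hyi : 0 < y i) : hull K {b, x, y} ≤ hull K {b, v, y} := by
  obtain ⟨α, β, γ, hα, hβ, hγ, rfl⟩ := mem_hull_triple.1 hv
  have hsum : α * b i + β * x i + γ * y i = 0 := by simpa using hvi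
  obtain rfl : α = 0 := by nlinarith [mul_nonneg hβ hxi, mul_nonneg hγ hyi.le]
  obtain rfl : γ = 0 := by nlinarith [mul_nonneg hβ hxi]
  simp only [zero_smul, zero_add, add_zero] at hv0 ⊢
  have hβ0 : β ≠ 0 := by rintro rfl; simp at hv0
  refine Submodule.span_le.2 (Set.insert_subset_iff.2 ⟨subset_hull (by simp), ?_⟩)
  refine Set.insert_subset_iff.2 ⟨?_, Set.singleton_subset_iff.2 (subset_hull (by simp))⟩
  have hβx : β • x ∈ hull K {b, β • x, y} := subset_hull (by simp)
  simpa [inv_smul_smul₀ hβ0] using smul_mem _ (inv_nonneg.2 hβ) hβx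

end PointedCone

namespace Matrix

variable {n : Type*} [Fintype n]

theorem mulVec_mem_hull_range_col {R m : Type*} [CommSemiring R] [PartialOrder R]
    [IsOrderedRing R] (T : Matrix m n R) {c : n → R} (hc : 0 ≤ c) :
    T *ᵥ c ∈ PointedCone.hull R (Set.range T.col) := by
  rw [mulVec_eq_sum]
  refine Submodule.sum_mem _ fun j _ => ?_
  rw [op_smul_eq_smul]
  exact PointedCone.smul_mem _ (hc j) (PointedCone.subset_hull ⟨j, rfl⟩)

theorem pow_mulVec_col_mem_hull_range_col [DecidableEq n] {K : Type*} [Field K] [LinearOrder K]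
    [IsStrictOrderedRing K] {A T : Matrix n n K} (hT : T.det ≠ 0)
    (hM : ∀ i j, 0 ≤ (T⁻¹ * A * T) i j) (k : ℕ) (j : n) :
    A ^ k *ᵥ T.col j ∈ PointedCone.hull K (Set.range T.col) := by
  have hconj : SemiconjBy T (T⁻¹ * A * T) A := by
    rw [SemiconjBy, ← mul_assoc, ← mul_assoc, mul_nonsing_inv T (isUnit_iff_ne_zero.2 hT),
      one_mul]
  have hcol : A ^ k *ᵥ T.col j = T *ᵥ ((T⁻¹ * A * T) ^ k).col j := by
    rw [← mulVec_single_one, ← mulVec_single_one, mulVec_mulVec, mulVec_mulVec,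
      (hconj.pow_right k).eq]
  rw [hcol]
  exact mulVec_mem_hull_range_col T fun i => pow_apply_nonneg hM k i j

end Matrix

open PointedCone

/- `b = ![1, 1, 0]` and `![0, 6, 19]`, `![266, 36, 138]`, `![1932, 216, 4962]` are `b, Ab, A²b, A³b`
for the matrix `A` of the theorem. -/

theorem cube_iterate_notMem_hull_of_mem {y : Fin 3 → ℝ} (hy : 0 ≤ y)
    (h2 : ![266, 36, 138] ∈ hull ℝ {![1, 1, 0], ![0, 6, 19], y}) :
    ![1932, 216, 4962] ∉ hull ℝ {![1, 1, 0], ![0, 6, 19], y} := by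
  intro h3
  obtain ⟨α, β, γ, hα, hβ, hγ, h2⟩ := mem_hull_triple.1 h2
  obtain ⟨α', β', γ', hα', hβ', hγ', h3⟩ := mem_hull_triple.1 h3
  have e20 : α + γ * y 0 = 266 := by simpa using congrFun h2 0
  have e21 : α + β * 6 + γ * y 1 = 36 := by simpa using congrFun h2 1
  have e22 : β * 19 + γ * y 2 = 138 := by simpa using congrFun h2 2
  have e30 : α' + γ' * y 0 = 1932 := by simpa using congrFun h3 0
  have e31 : α' + β' * 6 + γ' * y 1 = 216 := by simpa using congrFun h3 1
  have e32 : β' * 19 + γ' * y 2 = 4962 := by simpa using congrFun h3 2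
  have hu : 230 ≤ γ * y 0 := by nlinarith [mul_nonneg hγ (hy 1)]
  have hs : γ * y 2 ≤ 138 := by linarith
  have hu' : γ' * y 0 ≤ 1932 := by linarith
  have hs' : 4278 ≤ γ' * y 2 := by nlinarith [mul_nonneg hγ' (hy 1)]
  -- `(γ y₀) (γ' y₂) = (γ y₂) (γ' y₀)`, yet `230 * 4278 > 138 * 1932`.
  nlinarith [mul_le_mul hu hs' (by norm_num) (by linarith),
    mul_le_mul hs hu' (mul_nonneg hγ' (hy 0)) (by norm_num)]

theorem cube_iterate_notMem_hull {x y : Fin 3 → ℝ} (hx : 0 ≤ x) (hy : 0 ≤ y) (hy0 : 0 < y 0)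
    (h1 : ![0, 6, 19] ∈ hull ℝ {![1, 1, 0], x, y})
    (h2 : ![266, 36, 138] ∈ hull ℝ {![1, 1, 0], x, y}) :
    ![1932, 216, 4962] ∉ hull ℝ {![1, 1, 0], x, y} := by
  have hle := hull_le_hull_of_apply_eq_zero h1 (by simp) (by simp) (by simp) (hx 0) hy0
  exact fun h3 => cube_iterate_notMem_hull_of_mem hy (hle h2) (hle h3)

theorem exists_conj_nonneg_hessenberg :
    ∃ (B T : Matrix (Fin 3) (Fin 3) ℝ), T.det ≠ 0 ∧
      T⁻¹ * (!![0, 0, 14; 0, 6, 0; 15, 4, 6] : Matrix (Fin 3) (Fin 3) ℝ) * T = B ∧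
      (∀ i j, 0 ≤ B i j) ∧ (∀ i j : Fin 3, (j : ℕ) + 1 < (i : ℕ) → B i j = 0) := by
  set P : Matrix (Fin 3) (Fin 3) ℝ := !![1, 0, 0; 0, 0, 1; 0, 1, 0]
  have hP : P⁻¹ = P := inv_eq_left_inv (by ext i j; fin_cases i <;> fin_cases j <;> simp [P])
  refine ⟨!![0, 14, 0; 15, 6, 4; 0, 0, 6], P, by simp [P, det_fin_three], ?_,
    fun i j => by fin_cases i <;> fin_cases j <;> norm_num, fun i j h => ?_⟩
  · rw [hP]; ext i j; fin_cases i <;> fin_cases j <;> simp [P, mul_apply, Fin.sum_univ_three]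
  · fin_cases i <;> fin_cases j <;> simp_all

/-- The matrix `A = !![0,0,14; 0,6,0; 15,4,6]` is similar to a nonnegative
upper Hessenberg matrix, but there is no invertible nonnegative `T` with first column
`b = (1,1,0)ᵀ` such that `T⁻¹ A T` is nonnegative. -/
theorem counterexample_DT_controller_hessenberg :
    (∃ (B T : Matrix (Fin 3) (Fin 3) ℝ), T.det ≠ 0 ∧
        T⁻¹ * (!![0, 0, 14; 0, 6, 0; 15, 4, 6] : Matrix (Fin 3) (Fin 3) ℝ) * T = B ∧
        (∀ i j, 0 ≤ B i j) ∧ (∀ i j : Fin 3, (j : ℕ) + 1 < (i : ℕ) → B i j = 0)) ∧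
    ¬ ∃ T : Matrix (Fin 3) (Fin 3) ℝ, (∀ i j, 0 ≤ T i j) ∧ T.det ≠ 0 ∧
        (∀ i, T i 0 = (![1, 1, 0] : Fin 3 → ℝ) i) ∧
        (∀ i j, 0 ≤ (T⁻¹ * (!![0, 0, 14; 0, 6, 0; 15, 4, 6] : Matrix (Fin 3) (Fin 3) ℝ) * T) i j) := by
  refine ⟨exists_conj_nonneg_hessenberg, ?_⟩
  set A : Matrix (Fin 3) (Fin 3) ℝ := !![0, 0, 14; 0, 6, 0; 15, 4, 6]
  rintro ⟨T, hT, hdet, hcol, hM⟩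
  have hb : T.col 0 = ![1, 1, 0] := funext hcol
  have hiter (k : ℕ) : A ^ k *ᵥ ![1, 1, 0] ∈ hull ℝ {![1, 1, 0], T.col 1, T.col 2} := by
    have hcols : Set.range T.col = {T.col 0, T.col 1, T.col 2} := by
      ext v; simp [Fin.exists_fin_succ, eq_comm]
    rw [← hb, ← hcols]
    exact pow_mulVec_col_mem_hull_range_col hdet hM k 0
  obtain ⟨hA1, hA2, hA3⟩ : A ^ 1 *ᵥ ![1, 1, 0] = ![0, 6, 19] ∧
      A ^ 2 *ᵥ ![1, 1, 0] = ![266, 36, 138] ∧ A ^ 3 *ᵥ ![1, 1, 0] = ![1932, 216, 4962] := by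
    refine ⟨?_, ?_, ?_⟩ <;> simp only [pow_succ, pow_zero, one_mul, ← mulVec_mulVec] <;>
      ext i <;> fin_cases i <;> simp [A, mulVec, dotProduct, Fin.sum_univ_three] <;> norm_num
  have h1 := hA1 ▸ hiter 1
  have h2 := hA2 ▸ hiter 2
  have h3 := hA3 ▸ hiter 3
  have hx : 0 ≤ T.col 1 := fun i => hT i 1
  have hy : 0 ≤ T.col 2 := fun i => hT i 2
  rcases (hx 0).lt_or_eq with hx0 | hx0
  · rw [Set.pair_comm] at h1 h2 h3
    exact cube_iterate_notMem_hull hy hx hx0 h1 h2 h3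
  rcases (hy 0).lt_or_eq with hy0 | hy0
  · exact cube_iterate_notMem_hull hx hy hy0 h1 h2 h3
  have h20 := apply_le_apply_of_mem_hull (i := 0) (j := 1) h2 (by simp) hx0.symm hy0.symm
    (hx 1) (hy 1)
  norm_num at h20
end
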